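/- arXiv:2310.04036 — 12 statements merged into one kernel-verified Lean document; each statement's English description precedes it below -/
import Mathlib

section
/- For any finite simple graph G admitting a 2-transitive partition of size k, the maximum degree Δ(G) satisfies k ≤ ⌊Δ(G)/2⌋ + 1. In particular, Tr₂(G) ≤ ⌊Δ(G)/2⌋ + 1. -/
open SimpleGraph

def TwoTransPart {V : Type*} (G : SimpleGraph V) (k : ℕ) (P : Fin k → Set V) : Prop :=
  (∀ i, (P i).Nonempty) ∧ (∀ v, ∃! i, v ∈ P i) ∧
    ∀ i j : Fin k, i < j → ∀ v ∈ P j,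
      ∃ u w, u ∈ P i ∧ w ∈ P i ∧ u ≠ w ∧ G.Adj u v ∧ G.Adj w v

/-- The 2-transitivity `Tr₂(G)`: the maximum size of a 2-transitive partition of `G`. -/
noncomputable def tr2 {V : Type*} (G : SimpleGraph V) : ℕ :=
  sSup {k | ∃ P : Fin k → Set V, TwoTransPart G k P}

lemma key_lemma {V : Type*} [Fintype V] (G : SimpleGraph V) [DecidableRel G.Adj]
    (k : ℕ) (P : Fin k → Set V) (hP : TwoTransPart G k P) :
    k ≤ G.maxDegree / 2 + 1 := by
  classical
  obtain ⟨hne, huniq, hdom⟩ := hP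
  rcases Nat.eq_zero_or_pos k with hk | hk
  · omega
  set j : Fin k := ⟨k - 1, by omega⟩ with hj
  obtain ⟨v, hv⟩ := hne j
  have hdom' : ∀ i : Fin k, i < j →
      ∃ u w, u ∈ P i ∧ w ∈ P i ∧ u ≠ w ∧ G.Adj u v ∧ G.Adj w v :=
    fun i hi => hdom i j hi v hv
  choose u w hu hw huw hAu hAw using hdom'
  let f : Fin k → Finset V := fun i => if h : i < j then {u i h, w i h} else ∅
  have hcardf : ∀ i, i < j → (f i).card = 2 := by
    intro i hi
    simp only [f, dif_pos hi]
    rw [Finset.card_insert_of_notMem (by simpa using huw i hi)]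
    simp
  have hsub : ∀ i, f i ⊆ G.neighborFinset v := by
    intro i x hx
    by_cases hi : i < j
    · simp only [f, dif_pos hi, Finset.mem_insert, Finset.mem_singleton] at hx
      rcases hx with rfl | rfl
      · simp only [SimpleGraph.mem_neighborFinset]; exact (hAu i hi).symm
      · simp only [SimpleGraph.mem_neighborFinset]; exact (hAw i hi).symm
    · simp [f, dif_neg hi] at hx
  have hdisj : ∀ i₁ ∈ Finset.univ.filter (· < j), ∀ i₂ ∈ Finset.univ.filter (· < j),
      i₁ ≠ i₂ → Disjoint (f i₁) (f i₂) := by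
    intro i₁ h1 i₂ h2 hne12
    simp only [Finset.mem_filter, Finset.mem_univ, true_and] at h1 h2
    rw [Finset.disjoint_left]
    intro x hx1 hx2
    have hx1' : x ∈ P i₁ := by
      simp only [f, dif_pos h1, Finset.mem_insert, Finset.mem_singleton] at hx1
      rcases hx1 with rfl | rfl
      exacts [hu i₁ h1, hw i₁ h1]
    have hx2' : x ∈ P i₂ := by
      simp only [f, dif_pos h2, Finset.mem_insert, Finset.mem_singleton] at hx2
      rcases hx2 with rfl | rfl
      exacts [hu i₂ h2, hw i₂ h2]
    obtain ⟨i0, _, huniq'⟩ := huniq x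
    exact hne12 ((huniq' _ hx1').trans (huniq' _ hx2').symm)
  have hfilter : (Finset.univ.filter (· < j)).card = k - 1 := by
    have : Finset.univ.filter (· < j) = Finset.Iio j := by
      ext i; simp
    rw [this, Fin.card_Iio]
  have hcard : ((Finset.univ.filter (· < j)).biUnion f).card = 2 * (k - 1) := by
    rw [Finset.card_biUnion hdisj,
      Finset.sum_congr rfl (fun i hi => hcardf i (by simpa using hi)),
      Finset.sum_const, hfilter]
    ring
  have hdeg : 2 * (k - 1) ≤ G.degree v := by
    rw [← hcard, ← SimpleGraph.card_neighborFinset_eq_degree]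
    exact Finset.card_le_card (Finset.biUnion_subset.mpr fun i _ => hsub i)
  have := G.degree_le_maxDegree v
  omega

theorem stmt0 {V : Type*} [Fintype V] (G : SimpleGraph V) [DecidableRel G.Adj] :
    (∀ (k : ℕ) (P : Fin k → Set V), TwoTransPart G k P → k ≤ G.maxDegree / 2 + 1) ∧
      tr2 G ≤ G.maxDegree / 2 + 1 := by
  refine ⟨fun k P hP => key_lemma G k P hP, ?_⟩
  exact csSup_le' (fun k ⟨P, hP⟩ => key_lemma G k P hP)
end

section
/- For the complete graph K_n on n vertices, Tr₂(K_n) = ⌊(n−1)/2⌋ + 1. -/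
open SimpleGraph

lemma tt_upper (n k : ℕ) (P : Fin k → Set (Fin n)) (h : TwoTransPart ⊤ k P) :
    2 * k ≤ n + 1 := by
  classical
  obtain ⟨hne, huniq, htr⟩ := h
  rcases Nat.eq_zero_or_pos k with hk | hk
  · omega
  set Q : Fin k → Finset (Fin n) := fun i => (P i).toFinset with hQ
  have hdisj : ∀ i ∈ (Finset.univ : Finset (Fin k)), ∀ j ∈ Finset.univ, i ≠ j →
      Disjoint (Q i) (Q j) := by
    intro i _ j _ hij
    refine Finset.disjoint_left.mpr ?_
    intro v hvi hvj
    simp only [hQ, Set.mem_toFinset] at hvi hvj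
    obtain ⟨i', hi', hu⟩ := huniq v
    exact hij ((hu i hvi).trans (hu j hvj).symm)
  have hj : k - 1 < k := by omega
  set jl : Fin k := ⟨k - 1, hj⟩ with hjl
  have hcard : ∀ i : Fin k, (i : ℕ) < k - 1 → 2 ≤ (Q i).card := by
    intro i hi
    have hij : i < jl := by simp only [Fin.lt_def, hjl]; omega
    obtain ⟨v, hv⟩ := hne jl
    obtain ⟨u, w, hu, hw, huw, _, _⟩ := htr i jl hij v hv
    have hsub : ({u, w} : Finset (Fin n)) ⊆ Q i := by
      intro x hx
      simp only [Finset.mem_insert, Finset.mem_singleton] at hx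
      rcases hx with rfl | rfl <;> simp [hQ, Set.mem_toFinset, hu, hw]
    calc 2 = ({u, w} : Finset (Fin n)).card := by
            rw [Finset.card_insert_of_notMem (by simp [huw]), Finset.card_singleton]
      _ ≤ (Q i).card := Finset.card_le_card hsub
  have hcard1 : ∀ i : Fin k, 1 ≤ (Q i).card := by
    intro i
    obtain ⟨v, hv⟩ := hne i
    exact Finset.card_pos.mpr ⟨v, by simp [hQ, Set.mem_toFinset, hv]⟩
  have hsum : ∑ i : Fin k, (Q i).card ≤ n := by
    rw [← Finset.card_biUnion hdisj]
    calc (Finset.univ.biUnion Q).card ≤ (Finset.univ : Finset (Fin n)).card :=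
          Finset.card_le_card (Finset.subset_univ _)
      _ = n := by simp
  have hlow : 2 * (k - 1) + 1 ≤ ∑ i : Fin k, (Q i).card := by
    rw [← Finset.sum_erase_add _ _ (Finset.mem_univ jl)]
    have h1 : 2 * (k - 1) ≤ ∑ i ∈ Finset.univ.erase jl, (Q i).card := by
      have hc : (Finset.univ.erase jl).card = k - 1 := by
        rw [Finset.card_erase_of_mem (Finset.mem_univ jl)]; simp
      have key := Finset.card_nsmul_le_sum (Finset.univ.erase jl)
        (fun i => (Q i).card) 2 (fun i hi => by
          apply hcard
          have h1 := Finset.ne_of_mem_erase hi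
          have h2 := i.isLt
          have h3 : (i : ℕ) ≠ k - 1 := fun h => h1 (Fin.ext (by simp [hjl, h]))
          omega)
      simpa [smul_eq_mul, hc, mul_comm] using key
    have := hcard1 jl
    omega
  omega

lemma tt_construct (n : ℕ) (hn : 1 ≤ n) :
    ∃ P : Fin ((n - 1) / 2 + 1) → Set (Fin n), TwoTransPart ⊤ ((n - 1) / 2 + 1) P := by
  set m := (n - 1) / 2 with hm
  refine ⟨fun i => {v | min (v.val / 2) m = i.val}, ?_, ?_, ?_⟩
  · intro i
    have hlt := i.isLt
    have h2i : 2 * i.val < n := by omega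
    refine ⟨⟨2 * i.val, h2i⟩, ?_⟩
    simp only [Set.mem_setOf_eq]
    omega
  · intro v
    have hv : min (v.val / 2) m < m + 1 := by omega
    refine ⟨⟨min (v.val / 2) m, hv⟩, rfl, ?_⟩
    intro j hj
    exact Fin.ext hj.symm
  · intro i j hij v hv
    simp only [Fin.lt_def] at hij
    have hjlt := j.isLt
    have hi : i.val < m := by omega
    have h2m : 2 * m ≤ n - 1 := by omega
    have h1 : 2 * i.val < n := by omega
    have h2 : 2 * i.val + 1 < n := by omega
    simp only [Set.mem_setOf_eq] at hv
    refine ⟨⟨2 * i.val, h1⟩, ⟨2 * i.val + 1, h2⟩, ?_, ?_, ?_, ?_, ?_⟩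
    · simp only [Set.mem_setOf_eq]; omega
    · simp only [Set.mem_setOf_eq]; omega
    · simp only [ne_eq, Fin.mk.injEq]; omega
    · simp only [top_adj, ne_eq]
      intro h
      rw [Fin.ext_iff] at h
      simp only at h
      omega
    · simp only [top_adj, ne_eq]
      intro h
      rw [Fin.ext_iff] at h
      simp only at h
      omega

theorem stmt3 (n : ℕ) (hn : 1 ≤ n) :
    tr2 (⊤ : SimpleGraph (Fin n)) = (n - 1) / 2 + 1 := by
  have hmem : (n - 1) / 2 + 1 ∈ {k | ∃ P : Fin k → Set (Fin n), TwoTransPart ⊤ k P} :=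
    tt_construct n hn
  have hub : ∀ b ∈ {k | ∃ P : Fin k → Set (Fin n), TwoTransPart ⊤ k P},
      b ≤ (n - 1) / 2 + 1 := by
    rintro b ⟨P, hP⟩
    have := tt_upper n b P hP
    omega
  unfold tr2
  exact le_antisymm (csSup_le ⟨_, hmem⟩ hub) (le_csSup ⟨_, hub⟩ hmem)
end

section
/- If a graph G admits a transitive partition of size k with k even, then G admits a 2-transitive partition of size k/2; hence Tr₂(G) ≥ Tr(G)/2 when Tr(G) is even. -/
open SimpleGraph

def TransPart {V : Type*} (G : SimpleGraph V) (k : ℕ) (P : Fin k → Set V) : Prop :=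
  (∀ i, (P i).Nonempty) ∧ (∀ v, ∃! i, v ∈ P i) ∧
    ∀ i j : Fin k, i < j → ∀ v ∈ P j, ∃ u ∈ P i, G.Adj u v

/-- The transitivity `Tr(G)`: the maximum size of a transitive partition of `G`. -/
noncomputable def tr {V : Type*} (G : SimpleGraph V) : ℕ :=
  sSup {k | ∃ P : Fin k → Set V, TransPart G k P}

lemma Nat.sSup_div_two_le_sSup {S T : Set ℕ} (hTS : T ⊆ S)
    (hhalf : ∀ k ∈ S, Even k → k / 2 ∈ T) (heven : Even (sSup S)) : sSup S / 2 ≤ sSup T := by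
  rcases S.eq_empty_or_nonempty with rfl | hne
  · simp
  by_cases hbdd : BddAbove S
  · exact le_csSup (hbdd.mono hTS) (hhalf _ (Nat.sSup_mem hne hbdd) heven)
  · -- in `ℕ` an unbounded set has supremum `0`
    simp [csSup_of_not_bddAbove hbdd]

section

variable {V : Type*} {G : SimpleGraph V}

lemma TwoTransPart.transPart {k : ℕ} {P : Fin k → Set V} (hP : TwoTransPart G k P) :
    TransPart G k P := by
  obtain ⟨hne, huniq, hdom⟩ := hP
  refine ⟨hne, huniq, fun i j hij v hv => ?_⟩
  obtain ⟨u, -, hu, -, -, huv, -⟩ := hdom i j hij v hv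
  exact ⟨u, hu, huv⟩

/-- A vertex of a later merged part has a neighbour in each of `V_{2i}` and `V_{2i+1}`, and these
two neighbours differ because the parts are disjoint. -/
lemma TransPart.twoTransPart_mergePairs {m : ℕ} {P : Fin (m + m) → Set V}
    (hP : TransPart G (m + m) P) :
    TwoTransPart G m fun i => P ⟨2 * i, by omega⟩ ∪ P ⟨2 * i + 1, by omega⟩ := by
  obtain ⟨hne, huniq, hdom⟩ := hP
  refine ⟨fun i => (hne _).mono Set.subset_union_left, fun v => ?_, fun i j hij v hv => ?_⟩
  · obtain ⟨c, hc, hcuniq⟩ := huniq v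
    have hmem : ∀ d, v ∈ P d ↔ d = c := fun d => ⟨hcuniq d, fun h => h ▸ hc⟩
    refine ⟨⟨c / 2, by omega⟩, ?_, fun j hj => ?_⟩ <;>
      simp only [Set.mem_union, hmem, Fin.ext_iff] at * <;> omega
  · obtain ⟨c, hvc, hjc⟩ : ∃ c : Fin (m + m), v ∈ P c ∧ 2 * j.val ≤ c := by
      rcases hv with hv | hv
      exacts [⟨_, hv, le_rfl⟩, ⟨_, hv, Nat.le_succ _⟩]
    have hij : i.val < j.val := hij
    obtain ⟨u, hu, huv⟩ := hdom ⟨2 * i, by omega⟩ c (by simp only [Fin.lt_def]; omega) v hvc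
    obtain ⟨w, hw, hwv⟩ := hdom ⟨2 * i + 1, by omega⟩ c (by simp only [Fin.lt_def]; omega) v hvc
    refine ⟨u, w, Or.inl hu, Or.inr hw, fun huw => ?_, huv, hwv⟩
    have := congrArg Fin.val ((huniq u).unique hu (huw ▸ hw))
    simp at this

lemma exists_twoTransPart_half_of_even {k : ℕ} (hk : Even k)
    (h : ∃ P : Fin k → Set V, TransPart G k P) :
    ∃ Q : Fin (k / 2) → Set V, TwoTransPart G (k / 2) Q := by
  obtain ⟨m, rfl⟩ := hk
  obtain ⟨P, hP⟩ := h
  rw [show (m + m) / 2 = m by omega]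
  exact ⟨_, hP.twoTransPart_mergePairs⟩

end

theorem stmt4_general {V : Type*} (G : SimpleGraph V) :
    (∀ k : ℕ, Even k → (∃ P : Fin k → Set V, TransPart G k P) →
      ∃ Q : Fin (k / 2) → Set V, TwoTransPart G (k / 2) Q) ∧
    (Even (tr G) → tr G / 2 ≤ tr2 G) :=
  ⟨fun _ => exists_twoTransPart_half_of_even,
    Nat.sSup_div_two_le_sSup (fun _ ⟨P, hP⟩ => ⟨P, hP.transPart⟩)
      (fun _ hk heven => exists_twoTransPart_half_of_even heven hk)⟩

theorem stmt4 {V : Type*} [Fintype V] (G : SimpleGraph V) :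
    (∀ k : ℕ, Even k → (∃ P : Fin k → Set V, TransPart G k P) →
      ∃ Q : Fin (k / 2) → Set V, TwoTransPart G (k / 2) Q) ∧
    (Even (tr G) → tr G / 2 ≤ tr2 G) :=
  stmt4_general G
end

section
/- If a graph G admits a transitive partition of size k with k odd, then G admits a 2-transitive partition of size (k+1)/2; hence Tr₂(G) ≥ (Tr(G)+1)/2 when Tr(G) is odd. -/
open SimpleGraph

lemma part_bound {V : Type*} [Fintype V] {k : ℕ} (P : Fin k → Set V)
    (hne : ∀ i, (P i).Nonempty) (huniq : ∀ v, ∃! i, v ∈ P i) :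
    k ≤ Fintype.card V := by
  choose f hf using hne
  have hinj : Function.Injective f := by
    intro i j hij
    obtain ⟨c, _, hu⟩ := huniq (f i)
    have h1 := hu i (hf i)
    have h2 := hu j (by rw [hij]; exact hf j)
    exact h1.trans h2.symm
  simpa using Fintype.card_le_of_injective f hinj

lemma halve {V : Type*} (G : SimpleGraph V) (k : ℕ) (hk : Odd k)
    (h : ∃ P : Fin k → Set V, TransPart G k P) :
    ∃ Q : Fin ((k + 1) / 2) → Set V, TwoTransPart G ((k + 1) / 2) Q := by
  obtain ⟨P, hne, huniq, hdom⟩ := h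
  obtain ⟨t, ht⟩ := hk
  have hm : (k + 1) / 2 = t + 1 := by omega
  set m := (k + 1) / 2 with hmdef
  refine ⟨fun i => {v | ∃ j : Fin k, v ∈ P j ∧ (j : ℕ) / 2 = (i : ℕ)}, ?_, ?_, ?_⟩
  · intro i
    have hlt : 2 * (i : ℕ) < k := by have := i.2; omega
    obtain ⟨v, hv⟩ := hne ⟨2 * i, hlt⟩
    exact ⟨v, ⟨2 * i, hlt⟩, hv, by simp only [Fin.val_mk]; omega⟩
  · intro v
    obtain ⟨j, hj, hju⟩ := huniq v
    have hjm : (j : ℕ) / 2 < m := by have := j.2; omega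
    refine ⟨⟨(j : ℕ) / 2, hjm⟩, ⟨j, hj, rfl⟩, ?_⟩
    rintro i ⟨j', hj', hj'2⟩
    have : j' = j := hju j' hj'
    subst this
    exact Fin.ext hj'2.symm
  · rintro i i' hii' v ⟨l, hl, hl2⟩
    have hil : 2 * (i : ℕ) + 1 < (l : ℕ) := by
      have : (i : ℕ) < (i' : ℕ) := hii'
      omega
    have h2i : 2 * (i : ℕ) < k := by have := l.2; omega
    have h2i1 : 2 * (i : ℕ) + 1 < k := by have := l.2; omega
    obtain ⟨u, hu, hadj⟩ := hdom ⟨2 * i, h2i⟩ l (by simp [Fin.lt_def]; omega) v hl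
    obtain ⟨w, hw, hadj'⟩ := hdom ⟨2 * i + 1, h2i1⟩ l (by simp [Fin.lt_def]; omega) v hl
    refine ⟨u, w, ⟨⟨2 * i, h2i⟩, hu, by simp only [Fin.val_mk]; omega⟩, ⟨⟨2 * i + 1, h2i1⟩, hw, by simp only [Fin.val_mk]; omega⟩,
      ?_, hadj, hadj'⟩
    intro huw
    subst huw
    obtain ⟨c, _, hcu⟩ := huniq u
    have h1 := hcu ⟨2 * i, h2i⟩ hu
    have h2 := hcu ⟨2 * i + 1, h2i1⟩ hw
    have := Fin.ext_iff.mp (h1.trans h2.symm)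
    simp only [Fin.val_mk] at this
    omega

theorem stmt5 {V : Type*} [Fintype V] (G : SimpleGraph V) :
    (∀ k : ℕ, Odd k → (∃ P : Fin k → Set V, TransPart G k P) →
      ∃ Q : Fin ((k + 1) / 2) → Set V, TwoTransPart G ((k + 1) / 2) Q) ∧
    (Odd (tr G) → (tr G + 1) / 2 ≤ tr2 G) := by
  constructor
  · exact halve G
  · intro hodd
    have hbdd : BddAbove {k | ∃ P : Fin k → Set V, TransPart G k P} := by
      refine ⟨Fintype.card V, ?_⟩
      rintro k ⟨P, hne, huniq, -⟩
      exact part_bound P hne huniq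
    have hne : {k | ∃ P : Fin k → Set V, TransPart G k P}.Nonempty := by
      by_contra h
      rw [Set.not_nonempty_iff_eq_empty] at h
      have : tr G = 0 := by rw [tr, h, csSup_empty]; rfl
      rw [this] at hodd
      exact (Nat.not_odd_iff_even.mpr Even.zero) hodd
    have hmem : tr G ∈ {k | ∃ P : Fin k → Set V, TransPart G k P} :=
      Nat.sSup_mem hne hbdd
    have hQ := halve G (tr G) hodd hmem
    refine le_csSup ?_ hQ
    refine ⟨Fintype.card V, ?_⟩
    rintro k ⟨Q, hne', huniq', -⟩
    exact part_bound Q hne' huniq'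
end

section
/- Let G be a graph with Tr(G) = Δ(G) + 1, where Δ(G) is the maximum degree of G. If Tr(G) is even then Tr₂(G) = Tr(G)/2, and if Tr(G) is odd then Tr₂(G) = (Tr(G)+1)/2. -/
open SimpleGraph

/-!
A vertex `v` in the `j`-th class of a 2-transitive partition has two neighbours in
each earlier class, so `2 j ≤ deg v ≤ Δ` and `Tr₂(G) ≤ ⌊Δ/2⌋ + 1`. Conversely, merging the
classes of a transitive partition in consecutive pairs `{0,1}, {2,3}, …` gives a 2-transitive
partition with `⌈Tr(G)/2⌉` classes, since a vertex of a later class sees both halves of each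
earlier pair. When `Tr(G) = Δ + 1` the two bounds coincide.
-/

section

variable {V : Type*} {G : SimpleGraph V}

lemma eq_of_mem_of_existsUnique_mem {ι : Type*} {P : ι → Set V} (hP : ∀ v, ∃! i, v ∈ P i)
    {v : V} {a b : ι} (ha : v ∈ P a) (hb : v ∈ P b) : a = b :=
  (hP v).unique ha hb

namespace TransPart

lemma le_card [Fintype V] {k : ℕ} {P : Fin k → Set V} (hP : TransPart G k P) :
    k ≤ Fintype.card V := by
  choose rep hrep using hP.1
  simpa using Fintype.card_le_of_injective rep fun a b hab =>
    eq_of_mem_of_existsUnique_mem hP.2.1 (hrep a) (hab ▸ hrep b)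

lemma exists_size (G : SimpleGraph V) : ∃ k, ∃ P : Fin k → Set V, TransPart G k P := by
  rcases isEmpty_or_nonempty V with hV | ⟨⟨v⟩⟩
  · exact ⟨0, Fin.elim0, fun i => i.elim0, fun v => hV.elim v, fun i => i.elim0⟩
  · refine ⟨1, fun _ => Set.univ, fun _ => ⟨v, trivial⟩,
      fun _ => ⟨0, trivial, fun _ _ => Subsingleton.elim _ _⟩, fun i j hij => ?_⟩
    exact absurd hij (Subsingleton.elim i j ▸ lt_irrefl i)

lemma exists_tr [Fintype V] (G : SimpleGraph V) :
    ∃ P : Fin (tr G) → Set V, TransPart G (tr G) P :=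
  Nat.sSup_mem (exists_size G) ⟨Fintype.card V, fun _ ⟨_, hP⟩ => hP.le_card⟩

def pairUp {n : ℕ} (Q : Fin n → Set V) (j : Fin ((n + 1) / 2)) : Set V :=
  {v | ∃ i : Fin n, v ∈ Q i ∧ (i : ℕ) / 2 = j}

lemma twoTransPart_pairUp {n : ℕ} {Q : Fin n → Set V} (hQ : TransPart G n Q) :
    TwoTransPart G ((n + 1) / 2) (pairUp Q) := by
  refine ⟨fun j => ?_, fun v => ?_, fun a b hab v ⟨i, hi, hib⟩ => ?_⟩
  · obtain ⟨v, hv⟩ := hQ.1 ⟨2 * j, by omega⟩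
    exact ⟨v, _, hv, by simp⟩
  · obtain ⟨i, hi, hiu⟩ := hQ.2.1 v
    refine ⟨⟨i / 2, by omega⟩, ⟨i, hi, rfl⟩, fun j ⟨i', hi', hi'j⟩ => ?_⟩
    rw [hiu i' hi'] at hi'j
    exact Fin.ext hi'j.symm
  · have hab : (a : ℕ) < b := hab
    obtain ⟨u, hu, hadju⟩ :=
      hQ.2.2 ⟨2 * a, by omega⟩ i (by simp only [Fin.lt_def]; omega) v hi
    obtain ⟨w, hw, hadjw⟩ :=
      hQ.2.2 ⟨2 * a + 1, by omega⟩ i (by simp only [Fin.lt_def]; omega) v hi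
    refine ⟨u, w, ⟨_, hu, by simp⟩, ⟨_, hw, by simp; omega⟩, ?_, hadju, hadjw⟩
    rintro rfl
    simpa using eq_of_mem_of_existsUnique_mem hQ.2.1 hu hw

end TransPart

namespace TwoTransPart

variable [Fintype V] [DecidableRel G.Adj] {k : ℕ} {P : Fin k → Set V}

lemma two_mul_le_degree (hP : TwoTransPart G k P) {j : Fin k} {v : V} (hv : v ∈ P j) :
    2 * (j : ℕ) ≤ G.degree v := by
  classical
  set N : Fin k → Finset V := fun i => {u ∈ G.neighborFinset v | u ∈ P i}
  have two_le_card : ∀ i ∈ Finset.Iio j, 2 ≤ (N i).card := by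
    intro i hij
    obtain ⟨u, w, hu, hw, huw, hadju, hadjw⟩ := hP.2.2 i j (Finset.mem_Iio.1 hij) v hv
    exact Finset.one_lt_card.2
      ⟨u, by simp [N, hu, hadju.symm], w, by simp [N, hw, hadjw.symm], huw⟩
  have disjoint : (Finset.Iio j : Set (Fin k)).PairwiseDisjoint N :=
    fun a _ b _ hab => Finset.disjoint_left.2 fun u hua hub =>
      hab (eq_of_mem_of_existsUnique_mem hP.2.1 (Finset.mem_filter.1 hua).2
        (Finset.mem_filter.1 hub).2)
  calc 2 * (j : ℕ) = ∑ _ ∈ Finset.Iio j, 2 := by simp [mul_comm]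
    _ ≤ ∑ i ∈ Finset.Iio j, (N i).card := Finset.sum_le_sum two_le_card
    _ = ((Finset.Iio j).biUnion N).card := (Finset.card_biUnion disjoint).symm
    _ ≤ G.degree v :=
      Finset.card_le_card (Finset.biUnion_subset.2 fun _ _ => Finset.filter_subset _ _)

lemma le_maxDegree_div_two_add_one (hP : TwoTransPart G k P) : k ≤ G.maxDegree / 2 + 1 := by
  rcases Nat.eq_zero_or_pos k with rfl | hk
  · omega
  obtain ⟨v, hv⟩ := hP.1 ⟨k - 1, by omega⟩
  have : 2 * (k - 1) ≤ G.degree v := hP.two_mul_le_degree hv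
  have := G.degree_le_maxDegree v
  omega

end TwoTransPart

lemma tr2_le_maxDegree_div_two_add_one [Fintype V] [DecidableRel G.Adj] :
    tr2 G ≤ G.maxDegree / 2 + 1 :=
  csSup_le' fun _ ⟨_, hP⟩ => hP.le_maxDegree_div_two_add_one

lemma tr_add_one_div_two_le_tr2 [Fintype V] [DecidableRel G.Adj] : (tr G + 1) / 2 ≤ tr2 G := by
  obtain ⟨Q, hQ⟩ := TransPart.exists_tr G
  exact le_csSup ⟨_, fun _ ⟨_, hP⟩ => hP.le_maxDegree_div_two_add_one⟩
    ⟨_, hQ.twoTransPart_pairUp⟩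

end

theorem stmt6 {V : Type*} [Fintype V] (G : SimpleGraph V) [DecidableRel G.Adj]
    (h : tr G = G.maxDegree + 1) :
    (Even (tr G) → tr2 G = tr G / 2) ∧ (Odd (tr G) → tr2 G = (tr G + 1) / 2) := by
  have htr2 : tr2 G = (tr G + 1) / 2 :=
    le_antisymm (by have := tr2_le_maxDegree_div_two_add_one (G := G); omega)
      tr_add_one_div_two_le_tr2
  exact ⟨fun ⟨c, hc⟩ => by omega, fun _ => htr2⟩
end

section
/- Let T be the 2-complete minimum broadcast tree of order k (2-cmbt_k). Then Tr₂(T) = k. -/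
open SimpleGraph

universe u

/-- `IsCmbt2 G r k` : `G`, rooted at `r`, is a 2-complete minimum broadcast tree of order `k`. -/
inductive IsCmbt2 : ∀ {V : Type u}, SimpleGraph V → V → ℕ → Prop
  | base {V : Type u} (G : SimpleGraph V) (r : V)
      (hV : ∀ v : V, v = r) (hE : ∀ u v : V, ¬ G.Adj u v) : IsCmbt2 G r 1
  | step {V : Type u} (G : SimpleGraph V) (r : V) (k : ℕ)
      (S : Fin k → Bool → Set V) (rt : (i : Fin k) → Bool → V)
      (hrt : ∀ i b, rt i b ∈ S i b)
      (hpart : ∀ v : V, v ≠ r → ∃! p : Fin k × Bool, v ∈ S p.1 p.2)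
      (hr : ∀ i b, r ∉ S i b)
      (hinj : ∀ i b i' b', rt i b = rt i' b' → i = i' ∧ b = b')
      (hadjr : ∀ v : V, G.Adj r v ↔ ∃ i b, v = rt i b)
      (hsep : ∀ u v : V, G.Adj u v → u ≠ r → v ≠ r → ∃ i b, u ∈ S i b ∧ v ∈ S i b)
      (hsub : ∀ i b, IsCmbt2 (G.induce (S i b)) ⟨rt i b, hrt i b⟩ ((i : ℕ) + 1)) :
      IsCmbt2 G r (k + 1)

lemma IsCmbt2.pos {V : Type u} {G : SimpleGraph V} {r : V} {k : ℕ}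
    (h : IsCmbt2 G r k) : 0 < k := by
  cases h <;> omega

lemma IsCmbt2.nbr {V : Type u} {G : SimpleGraph V} {r : V} {k : ℕ} (h : IsCmbt2 G r k) :
    ∀ v : V, ∃ s : Finset V, s.card ≤ 2 * (k - 1) ∧ ∀ u, G.Adj v u → u ∈ s := by
  induction h with
  | base G r hV hE =>
    intro v
    exact ⟨∅, by simp, fun u hu => absurd hu (hE _ _)⟩
  | step G r k S rt hrt hpart hr hinj hadjr hsep hsub ih =>
    classical
    intro v
    by_cases hv : v = r
    · subst hv
      refine ⟨Finset.image (fun p : Fin k × Bool => rt p.1 p.2) Finset.univ, ?_, ?_⟩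
      · have h1 : (Finset.image (fun p : Fin k × Bool => rt p.1 p.2) Finset.univ).card
            ≤ (Finset.univ : Finset (Fin k × Bool)).card := Finset.card_image_le
        have h2 : (Finset.univ : Finset (Fin k × Bool)).card = k * 2 := by simp
        omega
      · intro u hu
        rw [hadjr] at hu
        obtain ⟨i, b, rfl⟩ := hu
        exact Finset.mem_image_of_mem (fun p : Fin k × Bool => rt p.1 p.2)
          (Finset.mem_univ (i, b))
    · obtain ⟨⟨i, b⟩, hmem, huniq⟩ := hpart v hv
      obtain ⟨s, hcard, hs⟩ := ih i b ⟨v, hmem⟩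
      refine ⟨insert r (s.image Subtype.val), ?_, ?_⟩
      · have h1 := Finset.card_insert_le r (s.image Subtype.val)
        have h2 : (s.image Subtype.val).card ≤ s.card := Finset.card_image_le
        have h3 : (i : ℕ) < k := i.isLt
        simp only [Nat.add_sub_cancel] at hcard
        omega
      · intro u hu
        by_cases hur : u = r
        · subst hur; exact Finset.mem_insert_self _ _
        · obtain ⟨i', b', hv', hu'⟩ := hsep v u hu hv hur
          have he : (i', b') = (i, b) := huniq (i', b') hv'
          obtain ⟨rfl, rfl⟩ : i' = i ∧ b' = b := Prod.ext_iff.mp he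
          have hadj : (G.induce (S i' b')).Adj ⟨v, hmem⟩ ⟨u, hu'⟩ := hu
          exact Finset.mem_insert_of_mem (Finset.mem_image_of_mem _ (hs _ hadj))

lemma IsCmbt2.part {V : Type u} {G : SimpleGraph V} {r : V} {k : ℕ} (h : IsCmbt2 G r k) :
    ∃ P : Fin k → Set V, TwoTransPart G k P ∧ ∀ j : Fin k, r ∈ P j ↔ (j : ℕ) + 1 = k := by
  induction h with
  | base G r hV hE =>
    refine ⟨fun _ => Set.univ, ⟨fun i => ⟨r, trivial⟩,
      fun v => ⟨0, trivial, fun j _ => Subsingleton.elim _ _⟩, ?_⟩, ?_⟩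
    · intro i j hij
      have hi := i.isLt; have hj := j.isLt
      rw [Fin.lt_def] at hij; omega
    · intro j
      have := j.isLt
      exact ⟨fun _ => by omega, fun _ => trivial⟩
  | step G r k S rt hrt hpart hr hinj hadjr hsep hsub ih =>
    classical
    choose P hP hroot using ih
    refine ⟨fun j => {v | (v = r ∧ (j : ℕ) = k) ∨ ∃ (i : Fin k) (b : Bool)
        (hji : (j : ℕ) ≤ (i : ℕ)) (hv : v ∈ S i b),
        (⟨v, hv⟩ : S i b) ∈ P i b ⟨(j : ℕ), by omega⟩}, ⟨?_, ?_, ?_⟩, ?_⟩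
    · -- nonempty
      intro j
      by_cases hj : (j : ℕ) = k
      · exact ⟨r, Or.inl ⟨rfl, hj⟩⟩
      · have hj' : (j : ℕ) < k := by have := j.isLt; omega
        refine ⟨rt ⟨j, hj'⟩ true, Or.inr ⟨⟨j, hj'⟩, true, le_refl _, hrt _ _, ?_⟩⟩
        exact (hroot ⟨j, hj'⟩ true ⟨(j : ℕ), Nat.lt_succ_self _⟩).2 rfl
    · -- unique membership
      intro v
      by_cases hv : v = r
      · subst hv
        refine ⟨Fin.last k, Or.inl ⟨rfl, rfl⟩, ?_⟩
        intro j hj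
        rcases hj with ⟨_, hk⟩ | ⟨i, b, hji, hvS, _⟩
        · exact Fin.ext hk
        · exact absurd hvS (hr i b)
      · obtain ⟨⟨i, b⟩, hm, hu⟩ := hpart v hv
        obtain ⟨j₀, hj₀, hj₀u⟩ := (hP i b).2.1 ⟨v, hm⟩
        have hj₀i : (j₀ : ℕ) ≤ (i : ℕ) := by have := j₀.isLt; omega
        have hik : (i : ℕ) < k := i.isLt
        refine ⟨⟨(j₀ : ℕ), by omega⟩, Or.inr ⟨i, b, hj₀i, hm, ?_⟩, ?_⟩
        · have : (⟨(j₀ : ℕ), by omega⟩ : Fin ((i : ℕ) + 1)) = j₀ := Fin.ext rfl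
          rw [this]; exact hj₀
        · intro j hj
          rcases hj with ⟨hvr, _⟩ | ⟨i', b', hji', hvS, hmem'⟩
          · exact absurd hvr hv
          · have he : (i', b') = (i, b) := hu (i', b') hvS
            obtain ⟨rfl, rfl⟩ : i' = i ∧ b' = b := Prod.ext_iff.mp he
            have hvv : (⟨v, hvS⟩ : S i' b') = ⟨v, hm⟩ := Subtype.ext rfl
            rw [hvv] at hmem'
            have := hj₀u ⟨(j : ℕ), by omega⟩ hmem'
            have hval : (j : ℕ) = (j₀ : ℕ) := congrArg Fin.val this
            exact Fin.ext hval
    · -- 2-transitivity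
      intro j' j hlt v hvj
      rcases hvj with ⟨rfl, hk⟩ | ⟨i, b, hji, hvS, hmem⟩
      · have hj' : (j' : ℕ) < k := by rw [Fin.lt_def] at hlt; omega
        have i : Fin k := ⟨(j' : ℕ), hj'⟩
        refine ⟨rt ⟨(j' : ℕ), hj'⟩ false, rt ⟨(j' : ℕ), hj'⟩ true,
          Or.inr ⟨⟨(j' : ℕ), hj'⟩, false, le_refl _, hrt _ _,
            (hroot ⟨(j' : ℕ), hj'⟩ false ⟨(j' : ℕ), Nat.lt_succ_self _⟩).2 rfl⟩,
          Or.inr ⟨⟨(j' : ℕ), hj'⟩, true, le_refl _, hrt _ _,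
            (hroot ⟨(j' : ℕ), hj'⟩ true ⟨(j' : ℕ), Nat.lt_succ_self _⟩).2 rfl⟩, ?_, ?_, ?_⟩
        · intro he
          exact absurd (hinj _ false _ true he).2 (by simp)
        · exact ((hadjr _).2 ⟨_, false, rfl⟩).symm
        · exact ((hadjr _).2 ⟨_, true, rfl⟩).symm
      · have hlt' : (j' : ℕ) < (j : ℕ) := hlt
        obtain ⟨u, w, hu, hw, huw, hau, haw⟩ :=
          (hP i b).2.2 ⟨(j' : ℕ), by omega⟩ ⟨(j : ℕ), by omega⟩ (by exact hlt') ⟨v, hvS⟩ hmem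
        refine ⟨u.1, w.1, Or.inr ⟨i, b, by omega, u.2, ?_⟩, Or.inr ⟨i, b, by omega, w.2, ?_⟩,
          fun he => huw (Subtype.ext he), hau, haw⟩
        · exact hu
        · exact hw
    · -- root class
      intro j
      constructor
      · intro hj
        rcases hj with ⟨_, hk⟩ | ⟨i, b, _, hvS, _⟩
        · omega
        · exact absurd hvS (hr i b)
      · intro hj
        exact Or.inl ⟨rfl, by omega⟩

theorem stmt10 {V : Type u} (G : SimpleGraph V) (r : V) (k : ℕ)
    (h : IsCmbt2 G r k) : tr2 G = k := by
  classical
  have hk1 : 0 < k := h.pos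
  have hmem : k ∈ {m | ∃ P : Fin m → Set V, TwoTransPart G m P} := by
    obtain ⟨P, hP, _⟩ := h.part
    exact ⟨P, hP⟩
  have hub : ∀ m ∈ {m | ∃ P : Fin m → Set V, TwoTransPart G m P}, m ≤ k := by
    rintro m ⟨P, hne, hun, htr⟩
    rcases m with _ | n
    · omega
    · obtain ⟨v, hv⟩ := hne (Fin.last n)
      obtain ⟨s, hcard, hs⟩ := h.nbr v
      have hex : ∀ i : Fin n, ∃ u w, u ∈ P i.castSucc ∧ w ∈ P i.castSucc ∧ u ≠ w ∧
          G.Adj u v ∧ G.Adj w v := fun i =>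
        htr i.castSucc (Fin.last n) (Fin.castSucc_lt_last i) v hv
      choose uu ww huu hww hne' hau haw using hex
      set f : Fin n × Bool → V := fun p => if p.2 then uu p.1 else ww p.1 with hf
      have hfs : ∀ p, f p ∈ s := by
        rintro ⟨i, b⟩
        cases b
        · exact hs _ (haw i).symm
        · exact hs _ (hau i).symm
      have hfi : Function.Injective f := by
        rintro ⟨i, b⟩ ⟨i', b'⟩ he
        have hmemi : f (i, b) ∈ P i.castSucc := by cases b <;> simp [hf] <;> [exact hww i; exact huu i]
        have hmemi' : f (i', b') ∈ P i'.castSucc := by cases b' <;> simp [hf] <;> [exact hww i'; exact huu i']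
        rw [he] at hmemi
        obtain ⟨c, hc, hcu⟩ := hun (f (i', b'))
        have h1 := hcu _ hmemi
        have h2 := hcu _ hmemi'
        have hii : i = i' := by
          have := h1.trans h2.symm
          exact Fin.castSucc_injective _ this
        subst hii
        have hbb : b = b' := by
          by_contra hbb
          cases b <;> cases b' <;> simp_all [hf]
          · exact hne' i he.symm
        rw [hbb]
      have himg : (Finset.univ.image f) ⊆ s := fun x hx => by
        obtain ⟨p, _, rfl⟩ := Finset.mem_image.1 hx
        exact hfs p
      have hc1 : (Finset.univ.image f).card = 2 * n := by
        rw [Finset.card_image_of_injective _ hfi]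
        simp [Nat.mul_comm]
      have := Finset.card_le_card himg
      omega
  exact le_antisymm (csSup_le ⟨k, hmem⟩ hub) (le_csSup ⟨k, hub⟩ hmem)
end

section
/- A tree T has a 2-transitive partition of size k if and only if T contains a 2-complete minimum broadcast tree of order k (2-cmbt_k) as a subgraph. -/
open SimpleGraph

universe u

/-! A 2-transitive partition is the same as a labelling `c` of the vertices in which every vertex
`v` has two neighbours labelled `j` for each `j < c v` (label a vertex by the index of its class).
In a cmbt, labelling each vertex by the order of the subtree it roots, minus one, gives such a
labelling, which extends by `0` off the subgraph. Conversely, a vertex `r` of top label `k` has two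
neighbours of each label `i < k`; since the tree is acyclic these lie in pairwise disjoint
components of `T - r`, and in each of them, with labels truncated at `i`, a cmbt of order `i + 1`
grows recursively. Joining these to `r` gives a cmbt of order `k + 1`. -/

section

variable {V : Type*} {G : SimpleGraph V}

namespace SimpleGraph

def reachSetWithin (G : SimpleGraph V) (D : Set V) (x : V) : Set V :=
  {y | ∃ p : G.Walk x y, ∀ v ∈ p.support, v ∈ D}

variable {D : Set V} {x y z r : V}

lemma self_mem_reachSetWithin (hx : x ∈ D) : x ∈ G.reachSetWithin D x :=
  ⟨.nil, by simpa⟩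

lemma reachSetWithin_subset : G.reachSetWithin D x ⊆ D :=
  fun _ ⟨p, hp⟩ => hp _ p.end_mem_support

lemma mem_reachSetWithin_of_adj (hy : y ∈ G.reachSetWithin D x) (hz : z ∈ D) (h : G.Adj y z) :
    z ∈ G.reachSetWithin D x := by
  obtain ⟨p, hp⟩ := hy
  refine ⟨p.concat h, fun v hv => ?_⟩
  rw [Walk.support_concat, List.mem_append, List.mem_singleton] at hv
  exact hv.elim (hp v) (· ▸ hz)

lemma IsAcyclic.disjoint_reachSetWithin (hac : G.IsAcyclic) (hrD : r ∉ D) (hx : G.Adj r x)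
    (hy : G.Adj r y) (hxy : x ≠ y) :
    Disjoint (G.reachSetWithin D x) (G.reachSetWithin D y) := by
  refine Set.disjoint_left.mpr fun z ⟨p, hp⟩ ⟨q, hq⟩ => ?_
  -- the walk `r → y ⇝ z ⇝ x` avoids `r` after its first step, yet must cross the bridge `r x`
  have hbridge := isBridge_iff_forall_walk_mem_edges.mp
    (isAcyclic_iff_forall_adj_isBridge.mp hac hx) ((q.append p.reverse).cons hy)
  rw [Walk.edges_cons, List.mem_cons] at hbridge
  rcases hbridge with hxy' | hmem
  · exact hxy (by simpa [hx.ne'] using hxy')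
  · obtain h | h := (Walk.mem_support_append_iff _ _).mp (Walk.fst_mem_support_of_mem_edges _ hmem)
    · exact hrD (hq r h)
    · exact hrD (hp r (by simpa using h))

end SimpleGraph

def IsTwoTransLabelling (G : SimpleGraph V) (A : Set V) (c : V → ℕ) : Prop :=
  ∀ a ∈ A, ∀ j < c a, ∃ u ∈ A, ∃ w ∈ A, c u = j ∧ c w = j ∧ u ≠ w ∧ G.Adj u a ∧ G.Adj w a

namespace IsTwoTransLabelling

variable {A : Set V} {c : V → ℕ} {r : V}

lemma min_const (h : IsTwoTransLabelling G A c) (m : ℕ) :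
    IsTwoTransLabelling G A (fun v => min (c v) m) := by
  intro a ha j hj
  obtain ⟨u, hu, w, hw, hcu, hcw, huw, hua, hwa⟩ := h a ha j (hj.trans_le (min_le_left _ _))
  have hjm : j ≤ m := (hj.trans_le (min_le_right _ _)).le
  exact ⟨u, hu, w, hw, by simp [hcu, hjm], by simp [hcw, hjm], huw, hua, hwa⟩

lemma reachSetWithin_diff (h : IsTwoTransLabelling G A c) (hmax : ∀ a ∈ A, c a ≤ c r) (x : V) :
    IsTwoTransLabelling G (G.reachSetWithin (A \ {r}) x) c := by
  intro a ha j hj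
  have haA : a ∈ A := (reachSetWithin_subset ha).1
  obtain ⟨u, hu, w, hw, hcu, hcw, huw, hua, hwa⟩ := h a haA j hj
  have hne : ∀ v, c v = j → v ≠ r := by
    rintro v hv rfl
    exact (hj.trans_le (hmax a haA)).ne hv.symm
  exact ⟨u, mem_reachSetWithin_of_adj ha ⟨hu, hne u hcu⟩ hua.symm,
    w, mem_reachSetWithin_of_adj ha ⟨hw, hne w hcw⟩ hwa.symm, hcu, hcw, huw, hua, hwa⟩

lemma exists_eq_of_le (h : IsTwoTransLabelling G A c) (hr : r ∈ A) {j : ℕ} (hj : j ≤ c r) :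
    ∃ v ∈ A, c v = j := by
  obtain hj | rfl := hj.lt_or_eq
  · obtain ⟨u, hu, -, -, hcu, -⟩ := h r hr j hj
    exact ⟨u, hu, hcu⟩
  · exact ⟨r, hr, rfl⟩

lemma twoTransPart (h : IsTwoTransLabelling G Set.univ c) (hmax : ∀ v, c v ≤ c r) :
    TwoTransPart G (c r + 1) (fun j => {v | c v = j}) := by
  refine ⟨fun j => ?_,
    fun v => ⟨⟨c v, Nat.lt_succ_of_le (hmax v)⟩, rfl, fun j hj => Fin.ext hj.symm⟩,
    fun i j hij v hv => ?_⟩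
  · obtain ⟨v, -, hv⟩ := h.exists_eq_of_le (Set.mem_univ r) (Nat.le_of_lt_succ j.2)
    exact ⟨v, hv⟩
  · obtain ⟨u, -, w, -, hu, hw, huw, hua, hwa⟩ := h v trivial i (hv ▸ hij)
    exact ⟨u, w, hu, hw, huw, hua, hwa⟩

lemma exists_extend {H : G.Subgraph} {c : H.verts → ℕ} {r : H.verts}
    (h : IsTwoTransLabelling H.coe Set.univ c) (hmax : ∀ v, c v ≤ c r) :
    ∃ c' : V → ℕ, IsTwoTransLabelling G Set.univ c' ∧ (∀ v, c' v ≤ c' r) ∧ c' r = c r := by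
  classical
  refine ⟨fun v => if hv : v ∈ H.verts then c ⟨v, hv⟩ else 0, fun a _ j hj => ?_,
    fun v => ?_, by simp⟩
  · by_cases ha : a ∈ H.verts
    · simp only [dif_pos ha] at hj
      obtain ⟨u, -, w, -, hu, hw, huw, hua, hwa⟩ := h ⟨a, ha⟩ trivial j hj
      exact ⟨u, trivial, w, trivial, by simpa using hu, by simpa using hw,
        Subtype.coe_ne_coe.mpr huw, H.coe_adj_sub _ _ hua, H.coe_adj_sub _ _ hwa⟩
    · simp [ha] at hj
  · by_cases hv : v ∈ H.verts
    · simpa [hv] using hmax ⟨v, hv⟩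
    · simp [hv]

end IsTwoTransLabelling

lemma TwoTransPart.exists_labelling [Nonempty V] {k : ℕ} {P : Fin k → Set V}
    (hP : TwoTransPart G k P) :
    ∃ c r, IsTwoTransLabelling G Set.univ c ∧ (∀ v, c v ≤ c r) ∧ c r + 1 = k := by
  obtain ⟨hne, hpart, htrans⟩ := hP
  choose idx hidx huniq using hpart
  have hidx_eq : ∀ v i, v ∈ P i → idx v = i := fun v i hv => (huniq v i hv).symm
  have hk : 0 < k := (idx (Classical.arbitrary V)).pos
  obtain ⟨r, hr⟩ := hne ⟨k - 1, by omega⟩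
  have hidx_r : (idx r : ℕ) = k - 1 := by rw [hidx_eq r _ hr]
  refine ⟨fun v => idx v, r, fun a _ j hj => ?_, fun v => ?_, ?_⟩
  · obtain ⟨u, w, hu, hw, huw, hua, hwa⟩ :=
      htrans ⟨j, hj.trans (idx a).2⟩ (idx a) hj a (hidx a)
    exact ⟨u, trivial, w, trivial, by simp [hidx_eq u _ hu], by simp [hidx_eq w _ hw],
      huw, hua, hwa⟩
  · have := (idx v).2
    dsimp only
    omega
  · dsimp only
    omega

namespace SimpleGraph.Subgraph

def isoInduceOfAdjIff {H T : G.Subgraph} (hle : T.verts ⊆ H.verts)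
    (hadj : ∀ ⦃x y⦄, x ∈ T.verts → y ∈ T.verts → (H.Adj x y ↔ T.Adj x y)) :
    T.coe ≃g H.coe.induce {v | ↑v ∈ T.verts} where
  toFun x := ⟨⟨x, hle x.2⟩, x.2⟩
  invFun y := ⟨y.1, y.2⟩
  left_inv _ := rfl
  right_inv _ := rfl
  map_rel_iff' {x y} := hadj x.2 y.2

variable {ι : Type*} {r : V} {ch : ι → V}

-- The singleton keeps `r` a vertex when `ι` is empty.
def starJoin (r : V) (ch : ι → V) (hadj : ∀ i, G.Adj r (ch i)) (T : ι → G.Subgraph) :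
    G.Subgraph :=
  G.singletonSubgraph r ⊔ ⨆ i, (T i ⊔ G.subgraphOfAdj (hadj i))

variable (hadj : ∀ i, G.Adj r (ch i)) (T : ι → G.Subgraph)

lemma starJoin_verts (hch : ∀ i, ch i ∈ (T i).verts) :
    (starJoin r ch hadj T).verts = insert r (⋃ i, (T i).verts) := by
  ext v
  simp only [starJoin, verts_sup, verts_iSup, singletonSubgraph_verts, subgraphOfAdj_verts,
    Set.mem_union, Set.mem_iUnion, Set.mem_insert_iff, Set.mem_singleton_iff]
  grind

lemma starJoin_adj {x y : V} :
    (starJoin r ch hadj T).Adj x y ↔ (∃ i, (T i).Adj x y) ∨ ∃ i, s(r, ch i) = s(x, y) := by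
  simp [starJoin, exists_or]

end SimpleGraph.Subgraph

end

section

variable {V : Type u} {G : SimpleGraph V}

namespace IsCmbt2

lemma map_iso {W : Type u} {G' : SimpleGraph W} {r : V} {k : ℕ}
    (h : IsCmbt2 G r k) (e : G ≃g G') : IsCmbt2 G' (e r) k := by
  induction h generalizing W with
  | base G r hV hE =>
    exact .base _ _ (fun v => by rw [← e.apply_symm_apply v, hV (e.symm v)])
      (fun u v huv => hE _ _ (e.symm.map_adj_iff.mpr huv))
  | step G r k S rt hrt hpart hr hinj hadjr hsep hsub ih =>
    have hne : ∀ {v}, v ≠ e r → e.symm v ≠ r := fun hv h => hv (by rw [← h, e.apply_symm_apply])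
    refine .step G' (e r) k (fun i b => e.symm ⁻¹' S i b) (fun i b => e (rt i b))
      (fun i b => by simpa using hrt i b) (fun v hv => hpart _ (hne hv))
      (fun i b => by simpa using hr i b) (fun i b i' b' h => hinj i b i' b' (e.injective h))
      (fun v => ?_) (fun u v huv hu hv => ?_) (fun i b => ih i b (e.induce ?_))
    · rw [← e.apply_symm_apply v, e.map_adj_iff, hadjr]
      simp only [e.apply_symm_apply, e.symm_apply_eq]
    · exact hsep _ _ (e.symm.map_adj_iff.mpr huv) (hne hu) (hne hv)
    · exact e.toEquiv.bijOn' (fun v hv => by simpa using hv) (fun v hv => hv)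

lemma exists_labelling {r : V} {k : ℕ} (h : IsCmbt2 G r k) :
    ∃ c : V → ℕ, IsTwoTransLabelling G Set.univ c ∧ (∀ v, c v ≤ c r) ∧ c r + 1 = k := by
  induction h with
  | base => exact ⟨fun _ => 0, fun _ _ j hj => absurd hj j.not_lt_zero, fun _ => le_rfl, rfl⟩
  | step G r k S rt hrt hpart hr hinj hadjr _ _ ih =>
    classical
    choose F hF hFmax hFr using ih
    -- the parts `S i b` are disjoint, so at most one summand is nonzero
    let c : _ → ℕ := fun v => if v = r then k else
      ∑ p : Fin k × Bool, if hv : v ∈ S p.1 p.2 then F p.1 p.2 ⟨v, hv⟩ else 0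
    have hc : ∀ i b v (hv : v ∈ S i b), c v = F i b ⟨v, hv⟩ := by
      intro i b v hv
      have hvr : v ≠ r := fun h => hr i b (h ▸ hv)
      simp only [c, if_neg hvr]
      rw [Finset.sum_eq_single (i, b)
        (fun p _ hp => dif_neg fun hv' => hp ((hpart v hvr).unique hv' hv)) (by simp), dif_pos hv]
    have hcr : c r = k := if_pos rfl
    have hF_rt : ∀ i b, F i b ⟨rt i b, hrt i b⟩ = i := fun i b => Nat.succ_injective (hFr i b)
    have hc_rt : ∀ i b, c (rt i b) = i := fun i b => (hc i b _ (hrt i b)).trans (hF_rt i b)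
    refine ⟨c, fun v _ j hj => ?_, fun v => ?_, by rw [hcr]⟩
    · by_cases hvr : v = r
      · subst hvr
        rw [hcr] at hj
        refine ⟨rt ⟨j, hj⟩ true, trivial, rt ⟨j, hj⟩ false, trivial, hc_rt _ _, hc_rt _ _,
          fun h => by simpa using (hinj _ _ _ _ h).2, ?_, ?_⟩ <;>
        exact G.adj_symm ((hadjr _).mpr ⟨_, _, rfl⟩)
      · obtain ⟨⟨i, b⟩, hv, -⟩ := hpart v hvr
        rw [hc i b v hv] at hj
        obtain ⟨u, -, w, -, hu, hw, huw, hua, hwa⟩ := hF i b ⟨v, hv⟩ trivial j hj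
        exact ⟨u, trivial, w, trivial, (hc i b u u.2).trans hu, (hc i b w w.2).trans hw,
          Subtype.coe_ne_coe.mpr huw, hua, hwa⟩
    · rw [hcr]
      by_cases hvr : v = r
      · rw [hvr, hcr]
      · obtain ⟨⟨i, b⟩, hv, -⟩ := hpart v hvr
        rw [hc i b v hv]
        exact ((hFmax i b ⟨v, hv⟩).trans (hF_rt i b).le).trans i.2.le

end IsCmbt2

lemma isCmbt2_starJoin {r : V} {k : ℕ} {ch : Fin k × Bool → V}
    (hadj : ∀ p, G.Adj r (ch p)) {T : Fin k × Bool → G.Subgraph}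
    (hch : ∀ p, ch p ∈ (T p).verts) (hr : ∀ p, r ∉ (T p).verts)
    (hdisj : ∀ p q v, v ∈ (T p).verts → v ∈ (T q).verts → p = q)
    (hT : ∀ p, IsCmbt2 (T p).coe ⟨ch p, hch p⟩ (p.1 + 1)) :
    IsCmbt2 (Subgraph.starJoin r ch hadj T).coe
      ⟨r, by simp [Subgraph.starJoin_verts hadj T hch]⟩ (k + 1) := by
  set H := Subgraph.starJoin r ch hadj T
  have hverts : H.verts = insert r (⋃ p, (T p).verts) := Subgraph.starJoin_verts hadj T hch
  have hTH : ∀ p, (T p).verts ⊆ H.verts := fun p v hv => by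
    rw [hverts]
    exact Set.mem_insert_of_mem _ (Set.mem_iUnion.mpr ⟨p, hv⟩)
  have hstar : ∀ {p x y}, s(r, ch p) = s(x, y) → x = r ∨ y = r := by
    intro p x y h
    rw [Sym2.eq_iff] at h
    tauto
  have hadjT : ∀ p ⦃x y⦄, x ∈ (T p).verts → y ∈ (T p).verts → (H.Adj x y ↔ (T p).Adj x y) := by
    intro p x y hx hy
    rw [Subgraph.starJoin_adj]
    refine ⟨?_, fun h => .inl ⟨p, h⟩⟩
    rintro (⟨q, hq⟩ | ⟨q, hq⟩)
    · rwa [hdisj q p x hq.fst_mem hx] at hq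
    · exact ((hstar hq).elim (fun h => hr p (h ▸ hx)) (fun h => hr p (h ▸ hy))).elim
  refine .step _ _ k (fun i b => {v : H.verts | (v : V) ∈ (T (i, b)).verts})
    (fun i b => ⟨ch (i, b), hTH _ (hch _)⟩) (fun i b => hch _) ?_ (fun i b => hr _) ?_ ?_ ?_
    (fun i b => (hT (i, b)).map_iso (Subgraph.isoInduceOfAdjIff (hTH _) (hadjT _)))
  · rintro ⟨v, hv⟩ hvr
    rw [hverts, Set.mem_insert_iff, Set.mem_iUnion] at hv
    obtain ⟨p, hp⟩ := hv.resolve_left (fun h => hvr (Subtype.ext h))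
    exact ⟨p, hp, fun q hq => hdisj q p v hq hp⟩
  · intro i b i' b' h
    have h' : ch (i, b) = ch (i', b') := congrArg Subtype.val h
    exact Prod.ext_iff.mp (hdisj _ _ _ (h' ▸ hch (i, b)) (hch (i', b')))
  · rintro ⟨v, hv⟩
    rw [Subgraph.coe_adj, Subgraph.starJoin_adj]
    constructor
    · rintro (⟨p, hp⟩ | ⟨p, hp⟩)
      · exact (hr p hp.fst_mem).elim
      · exact ⟨p.1, p.2, Subtype.ext (Sym2.congr_right.mp hp).symm⟩
    · rintro ⟨i, b, h⟩
      exact .inr ⟨(i, b), by rw [Subtype.ext_iff.mp h]⟩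
  · rintro ⟨x, hx⟩ ⟨y, hy⟩ hxy hxr hyr
    rw [Subgraph.coe_adj, Subgraph.starJoin_adj] at hxy
    rcases hxy with ⟨p, hp⟩ | ⟨p, hp⟩
    · exact ⟨p.1, p.2, hp.fst_mem, hp.snd_mem⟩
    · exact ((hstar hp).elim (hxr <| Subtype.ext ·) (hyr <| Subtype.ext ·)).elim

lemma IsTwoTransLabelling.exists_isCmbt2_subgraph (hac : G.IsAcyclic) {A : Set V} {c : V → ℕ}
    {r : V} (hc : IsTwoTransLabelling G A c) (hr : r ∈ A) (hmax : ∀ a ∈ A, c a ≤ c r) :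
    ∃ H : G.Subgraph, H.verts ⊆ A ∧ ∃ h : r ∈ H.verts, IsCmbt2 H.coe ⟨r, h⟩ (c r + 1) := by
  induction hk : c r using Nat.strong_induction_on generalizing A c r with
  | _ k IH =>
  choose u hu w hw hcu hcw huw hur hwr using fun i : Fin k => hc r hr i (hk ▸ i.2)
  let ch : Fin k × Bool → V := fun p => bif p.2 then u p.1 else w p.1
  have hchA : ∀ p, ch p ∈ A := by rintro ⟨i, _ | _⟩ <;> simp [ch, hu, hw]
  have hchc : ∀ p, c (ch p) = p.1 := by rintro ⟨i, _ | _⟩ <;> simp [ch, hcu, hcw]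
  have hadj : ∀ p, G.Adj r (ch p) := by
    rintro ⟨i, _ | _⟩ <;> simp [ch, (hur _).symm, (hwr _).symm]
  have hchinj : Function.Injective ch := by
    rintro ⟨i, b⟩ ⟨i', b'⟩ h
    obtain rfl : i = i' := Fin.ext (by rw [← hchc (i, b), ← hchc (i', b'), h])
    cases b <;> cases b' <;> simp_all [ch, huw i, (huw i).symm]
  -- each child roots a smaller instance in its own component of `A - r`, labels truncated at `p.1`
  let C : Fin k × Bool → Set V := fun p => G.reachSetWithin (A \ {r}) (ch p)
  have hchild : ∀ p, ∃ T : G.Subgraph, T.verts ⊆ C p ∧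
      ∃ h : ch p ∈ T.verts, IsCmbt2 T.coe ⟨ch p, h⟩ (p.1 + 1) := by
    intro p
    have hmin : min (c (ch p)) p.1 = p.1 := by simp [hchc]
    obtain ⟨T, hTC, hchT, hT⟩ := IH p.1 (hk ▸ p.1.2)
      ((hc.reachSetWithin_diff hmax (ch p)).min_const p.1)
      (self_mem_reachSetWithin ⟨hchA p, (hadj p).ne'⟩)
      (fun a _ => hmin.symm ▸ min_le_right _ _) hmin
    exact ⟨T, hTC, hchT, hmin ▸ hT⟩
  choose T hTC hchT hT using hchild
  have hrT : ∀ p, r ∉ (T p).verts := fun p h => (reachSetWithin_subset (hTC p h)).2 rfl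
  have hdisj : ∀ p q v, v ∈ (T p).verts → v ∈ (T q).verts → p = q := by
    intro p q v hp hq
    by_contra hpq
    exact Set.disjoint_left.mp (hac.disjoint_reachSetWithin (fun h => h.2 rfl) (hadj p) (hadj q)
      (hchinj.ne hpq)) (hTC p hp) (hTC q hq)
  refine ⟨Subgraph.starJoin r ch hadj T, ?_, _, isCmbt2_starJoin hadj hchT hrT hdisj hT⟩
  rw [Subgraph.starJoin_verts hadj T hchT]
  exact Set.insert_subset hr (Set.iUnion_subset fun p => (hTC p).trans
    (reachSetWithin_subset.trans Set.sdiff_subset))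

lemma IsCmbt2.exists_twoTransPart {H : G.Subgraph} {r : H.verts} {k : ℕ}
    (h : IsCmbt2 H.coe r k) : ∃ P : Fin k → Set V, TwoTransPart G k P := by
  obtain ⟨c, hc, hmax, rfl⟩ := h.exists_labelling
  obtain ⟨c', hc', hmax', hr⟩ := hc.exists_extend hmax
  rw [← hr]
  exact ⟨_, hc'.twoTransPart hmax'⟩

end

theorem stmt11_general {V : Type u} (G : SimpleGraph V) (hT : G.IsTree) (k : ℕ) :
    (∃ P : Fin k → Set V, TwoTransPart G k P) ↔
      ∃ (H : G.Subgraph) (r : H.verts), IsCmbt2 H.coe r k := by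
  refine ⟨fun ⟨P, hP⟩ => ?_, fun ⟨H, r, hH⟩ => hH.exists_twoTransPart⟩
  have : Nonempty V := hT.connected.nonempty
  obtain ⟨c, r, hc, hmax, rfl⟩ := hP.exists_labelling
  obtain ⟨H, -, hr, hH⟩ :=
    hc.exists_isCmbt2_subgraph hT.isAcyclic (Set.mem_univ r) fun a _ => hmax a
  exact ⟨H, ⟨r, hr⟩, hH⟩

theorem stmt11 {V : Type u} [Fintype V] (G : SimpleGraph V) (hT : G.IsTree) (k : ℕ) :
    (∃ P : Fin k → Set V, TwoTransPart G k P) ↔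
      ∃ (H : G.Subgraph) (r : H.verts), IsCmbt2 H.coe r k :=
  stmt11_general G hT k
end

section
/- Let G be a connected graph with Tr₂(G) = k, k ≥ 3. Then there exists a 2-transitive partition {V₁, ..., V_k} of G such that |V_k| = 1, |V_{k−1}| = 2, and |V_{k−i}| ≤ 2·3^{i−1} for all 2 ≤ i ≤ k−2. -/
open SimpleGraph

/-!
Start from a 2-transitive partition of maximum size `k` and a vertex `v₀` of its top part.
Walking down the parts, keep `v₀` and, for every vertex kept so far, two of its neighbours in
the current part; move every vertex that is never kept to the bottom part. Each kept vertex
still has its two chosen neighbours in every kept part below it, and the bottom part only grew,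
so the partition stays 2-transitive. The top part becomes `{v₀}`, the next one the two chosen
neighbours of `v₀`, and since every step at most triples the number of kept vertices, at most
`3^(i-1)` vertices are kept in the top `i` parts, each contributing at most two vertices to the
part below them.
-/

open Function

section TwoTransitive

variable {V : Type*} {G : SimpleGraph V}

def HasTwoNeighborsIn (G : SimpleGraph V) (A : Set V) (v : V) : Prop :=
  ∃ u w, u ∈ A ∧ w ∈ A ∧ u ≠ w ∧ G.Adj u v ∧ G.Adj w v

theorem HasTwoNeighborsIn.mono {A B : Set V} {v : V} (hAB : A ⊆ B)
    (h : HasTwoNeighborsIn G A v) : HasTwoNeighborsIn G B v := by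
  obtain ⟨u, w, hu, hw, huw, hu', hw'⟩ := h
  exact ⟨u, w, hAB hu, hAB hw, huw, hu', hw'⟩

theorem HasTwoNeighborsIn.two_le_ncard {A : Set V} {v : V} (h : HasTwoNeighborsIn G A v)
    (hA : A.Finite) : 2 ≤ A.ncard := by
  obtain ⟨u, w, hu, hw, huw, -⟩ := h
  exact Set.ncard_pair huw ▸ Set.ncard_le_ncard (Set.pair_subset hu hw) hA

-- `sSup` of an empty or an unbounded set of naturals is `0`, so `tr2 G ≠ 0` is attained.
theorem exists_twoTransPart_of_tr2_eq {k : ℕ} (htr : tr2 G = k) (hk : k ≠ 0) :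
    ∃ P : Fin k → Set V, TwoTransPart G k P := by
  have hne : {k | ∃ P : Fin k → Set V, TwoTransPart G k P}.Nonempty := by
    by_contra h
    rw [Set.not_nonempty_iff_eq_empty] at h
    simp [tr2, h] at htr
    omega
  have hbdd : BddAbove {k | ∃ P : Fin k → Set V, TwoTransPart G k P} := by
    by_contra h
    rw [tr2, Nat.sSup_of_not_bddAbove h] at htr
    omega
  exact htr ▸ Nat.sSup_mem hne hbdd

variable {k : ℕ} {P : Fin k → Set V}

theorem TwoTransPart.eq_of_mem (hP : TwoTransPart G k P) {v : V} {i j : Fin k}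
    (hi : v ∈ P i) (hj : v ∈ P j) : i = j :=
  (hP.2.1 v).unique hi hj

theorem TwoTransPart.hasTwoNeighborsIn (hP : TwoTransPart G k P) {i j : Fin k} (hij : i < j)
    {v : V} (hv : v ∈ P j) : HasTwoNeighborsIn G (P i) v :=
  hP.2.2 i j hij v hv

def moveToBottom (P : Fin k → Set V) (R : Set V) (i : Fin k) : Set V :=
  {v | v ∈ R ∧ v ∈ P i ∨ v ∉ R ∧ (i : ℕ) = 0}

theorem subset_moveToBottom_of_eq_zero (R : Set V) {i : Fin k} (hi : (i : ℕ) = 0) :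
    P i ⊆ moveToBottom P R i := by
  intro v hv
  by_cases hvR : v ∈ R <;> simp [moveToBottom, hvR, hv, hi]

theorem moveToBottom_of_ne_zero (R : Set V) {i : Fin k} (hi : (i : ℕ) ≠ 0) :
    moveToBottom P R i = P i ∩ R := by
  ext v
  by_cases hvR : v ∈ R <;> simp [moveToBottom, hvR, hi]

theorem TwoTransPart.moveToBottom (hP : TwoTransPart G k P) {R : Set V}
    (hne : ∀ i : Fin k, (i : ℕ) ≠ 0 → (P i ∩ R).Nonempty)
    (hclosed : ∀ i j : Fin k, (i : ℕ) ≠ 0 → i < j → ∀ v ∈ P j ∩ R,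
      HasTwoNeighborsIn G (P i ∩ R) v) :
    TwoTransPart G k (moveToBottom P R) := by
  refine ⟨fun i => ?_, fun v => ?_, fun i j hij v hv => ?_⟩
  · by_cases hi : (i : ℕ) = 0
    · exact (hP.1 i).mono (subset_moveToBottom_of_eq_zero R hi)
    · exact moveToBottom_of_ne_zero R hi ▸ hne i hi
  · by_cases hvR : v ∈ R
    · simpa [_root_.moveToBottom, hvR] using hP.2.1 v
    · have hk : 0 < k := (hP.2.1 v).exists.choose.pos
      exact ⟨⟨0, hk⟩, by simp [_root_.moveToBottom, hvR],
        fun j hj => Fin.ext (by simpa [_root_.moveToBottom, hvR] using hj)⟩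
  · have hj : (j : ℕ) ≠ 0 := by have := Fin.lt_def.1 hij; omega
    rw [moveToBottom_of_ne_zero R hj] at hv
    by_cases hi : (i : ℕ) = 0
    · exact (hP.hasTwoNeighborsIn hij hv.1).mono (subset_moveToBottom_of_eq_zero R hi)
    · exact moveToBottom_of_ne_zero R hi ▸ hclosed i j hi hij v hv

end TwoTransitive

section PairClosure

variable {V : Type*} [DecidableEq V] {G : SimpleGraph V}

variable (G) in
open Classical in
noncomputable def neighborPair (A : Set V) (v : V) : Finset V :=
  if h : HasTwoNeighborsIn G A v then {h.choose, h.choose_spec.choose} else ∅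

theorem coe_neighborPair_subset (A : Set V) (v : V) : ↑(neighborPair G A v) ⊆ A := by
  unfold neighborPair
  split_ifs with h
  · obtain ⟨hu, hw, -⟩ := h.choose_spec.choose_spec
    intro x hx
    rcases Finset.mem_insert.1 hx with rfl | hx
    · exact hu
    · exact Finset.mem_singleton.1 hx ▸ hw
  · simp

theorem card_neighborPair_le (A : Set V) (v : V) : (neighborPair G A v).card ≤ 2 := by
  unfold neighborPair
  split_ifs
  · exact Finset.card_le_two
  · simp

theorem hasTwoNeighborsIn_neighborPair {A : Set V} {v : V} (h : HasTwoNeighborsIn G A v) :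
    HasTwoNeighborsIn G ↑(neighborPair G A v) v := by
  rw [neighborPair, dif_pos h]
  obtain ⟨-, -, huw, hu, hw⟩ := h.choose_spec.choose_spec
  exact ⟨_, _, by simp, by simp, huw, hu, hw⟩

variable (G) in
noncomputable def pairClosure (L : ℕ → Set V) (v₀ : V) : ℕ → Finset V
  | 0 => {v₀}
  | d + 1 => pairClosure L v₀ d ∪ (pairClosure L v₀ d).biUnion (neighborPair G (L (d + 1)))

variable {L : ℕ → Set V} {v₀ : V}

theorem pairClosure_mono : Monotone (pairClosure G L v₀) :=
  monotone_nat_of_le_succ fun _ => Finset.subset_union_left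

theorem mem_pairClosure_self (d : ℕ) : v₀ ∈ pairClosure G L v₀ d :=
  pairClosure_mono (Nat.zero_le d) (Finset.mem_singleton_self v₀)

theorem neighborPair_subset_pairClosure {v : V} {d : ℕ} (hv : v ∈ pairClosure G L v₀ d) :
    neighborPair G (L (d + 1)) v ⊆ pairClosure G L v₀ (d + 1) :=
  fun _ hx => Finset.mem_union_right _ (Finset.mem_biUnion.2 ⟨v, hv, hx⟩)

theorem card_pairClosure_le (d : ℕ) : (pairClosure G L v₀ d).card ≤ 3 ^ d := by
  induction d with
  | zero => simp [pairClosure]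
  | succ d ih =>
    have hpairs : ((pairClosure G L v₀ d).biUnion (neighborPair G (L (d + 1)))).card
        ≤ (pairClosure G L v₀ d).card * 2 :=
      Finset.card_biUnion_le_card_mul _ _ _ fun _ _ => card_neighborPair_le _ _
    calc (pairClosure G L v₀ (d + 1)).card
        ≤ (pairClosure G L v₀ d).card
          + ((pairClosure G L v₀ d).biUnion (neighborPair G (L (d + 1)))).card :=
          Finset.card_union_le _ _
      _ ≤ 3 ^ (d + 1) := by rw [pow_succ]; omega

theorem coe_pairClosure_subset (hv₀ : v₀ ∈ L 0) (d : ℕ) :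
    ↑(pairClosure G L v₀ d) ⊆ ⋃ e ≤ d, L e := by
  induction d with
  | zero => simpa [pairClosure] using hv₀
  | succ d ih =>
    intro x hx
    simp only [pairClosure, Finset.coe_union, Finset.coe_biUnion, Set.mem_union,
      Set.mem_iUnion] at hx
    simp only [Set.mem_iUnion]
    rcases hx with hx | ⟨u, -, hx⟩
    · obtain ⟨e, he, hx⟩ := Set.mem_iUnion₂.1 (ih hx)
      exact ⟨e, by omega, hx⟩
    · exact ⟨d + 1, le_rfl, coe_neighborPair_subset _ u hx⟩

theorem mem_pairClosure_of_mem_level (hL : Pairwise (Disjoint on L)) {v : V} {e d : ℕ}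
    (hv : v ∈ pairClosure G L v₀ d) (he : v ∈ L e) : v ∈ pairClosure G L v₀ e := by
  induction d with
  | zero => exact pairClosure_mono (Nat.zero_le e) hv
  | succ d ih =>
    rcases Finset.mem_union.1 hv with hv | hv
    · exact ih hv
    · obtain ⟨u, -, hu⟩ := Finset.mem_biUnion.1 hv
      obtain rfl : e = d + 1 := by
        by_contra hne
        exact Set.disjoint_left.1 (hL hne) he (coe_neighborPair_subset _ u hu)
      exact Finset.mem_union_right _ hv

theorem level_zero_inter_pairClosure (hL : Pairwise (Disjoint on L)) (hv₀ : v₀ ∈ L 0)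
    (d : ℕ) : L 0 ∩ ↑(pairClosure G L v₀ d) = {v₀} := by
  ext v
  constructor
  · rintro ⟨hv0, hv⟩
    simpa [pairClosure] using mem_pairClosure_of_mem_level hL hv hv0
  · rintro rfl
    exact ⟨hv₀, mem_pairClosure_self d⟩

theorem level_succ_inter_pairClosure_subset (hL : Pairwise (Disjoint on L)) (hv₀ : v₀ ∈ L 0)
    (e d : ℕ) : L (e + 1) ∩ ↑(pairClosure G L v₀ d)
      ⊆ ↑((pairClosure G L v₀ e).biUnion (neighborPair G (L (e + 1)))) := by
  rintro v ⟨he, hv⟩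
  rcases Finset.mem_union.1 (mem_pairClosure_of_mem_level hL hv he) with hv | hv
  · obtain ⟨e', he', hv'⟩ := Set.mem_iUnion₂.1 (coe_pairClosure_subset hv₀ e hv)
    exact absurd he (Set.disjoint_left.1 (hL (by omega : e' ≠ e + 1)) hv')
  · exact hv

theorem ncard_level_succ_inter_pairClosure_le (hL : Pairwise (Disjoint on L))
    (hv₀ : v₀ ∈ L 0) (e d : ℕ) : (L (e + 1) ∩ ↑(pairClosure G L v₀ d)).ncard ≤ 2 * 3 ^ e :=
  calc (L (e + 1) ∩ ↑(pairClosure G L v₀ d)).ncard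
      ≤ ((pairClosure G L v₀ e).biUnion (neighborPair G (L (e + 1)))).card := by
        rw [← Set.ncard_coe_finset]
        exact Set.ncard_le_ncard (level_succ_inter_pairClosure_subset hL hv₀ e d)
          (Finset.finite_toSet _)
    _ ≤ (pairClosure G L v₀ e).card * 2 :=
        Finset.card_biUnion_le_card_mul _ _ _ fun _ _ => card_neighborPair_le _ _
    _ ≤ 2 * 3 ^ e := by
        have := card_pairClosure_le (G := G) (L := L) (v₀ := v₀) e
        omega

theorem hasTwoNeighborsIn_level_inter_pairClosure (hL : Pairwise (Disjoint on L))
    {v : V} {e e' d : ℕ} (hv : v ∈ L e ∩ ↑(pairClosure G L v₀ d)) (hee' : e < e')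
    (he'd : e' ≤ d) (h : HasTwoNeighborsIn G (L e') v) :
    HasTwoNeighborsIn G (L e' ∩ ↑(pairClosure G L v₀ d)) v := by
  obtain ⟨e', rfl⟩ : ∃ e'', e' = e'' + 1 := ⟨e' - 1, by omega⟩
  have hv' : v ∈ pairClosure G L v₀ e' :=
    pairClosure_mono (by omega) (mem_pairClosure_of_mem_level hL hv.2 hv.1)
  refine (hasTwoNeighborsIn_neighborPair h).mono (Set.subset_inter
    (coe_neighborPair_subset _ v) ?_)
  exact Finset.coe_subset.2
    ((neighborPair_subset_pairClosure hv').trans (pairClosure_mono he'd))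

end PairClosure

section LevelsFromTop

variable {V : Type*} {G : SimpleGraph V} {k : ℕ} {P : Fin k → Set V}

/-- The parts of `P` numbered from the top; padding with `∅` keeps all levels pairwise
disjoint. -/
def levelsFromTop (P : Fin k → Set V) (e : ℕ) : Set V :=
  if h : e < k then P ⟨k - 1 - e, by omega⟩ else ∅

theorem levelsFromTop_of_add_eq (P : Fin k → Set V) (i : Fin k) {e : ℕ}
    (h : (i : ℕ) + e + 1 = k) : levelsFromTop P e = P i := by
  rw [levelsFromTop, dif_pos (by omega)]
  exact congrArg P (Fin.ext (by simp only; omega))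

theorem TwoTransPart.pairwise_disjoint_levelsFromTop (hP : TwoTransPart G k P) :
    Pairwise (Disjoint on levelsFromTop P) := by
  intro e e' hne
  simp only [onFun, levelsFromTop]
  split_ifs
  · refine Set.disjoint_left.2 fun v hv hv' => hne ?_
    have := congrArg Fin.val (hP.eq_of_mem hv hv')
    simp only at this
    omega
  all_goals simp

theorem TwoTransPart.hasTwoNeighborsIn_levelsFromTop (hP : TwoTransPart G k P) {e e' : ℕ}
    (hee' : e < e') (he' : e' < k) {v : V} (hv : v ∈ levelsFromTop P e) :
    HasTwoNeighborsIn G (levelsFromTop P e') v := by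
  rw [levelsFromTop, dif_pos (by omega)] at hv ⊢
  exact hP.hasTwoNeighborsIn (Fin.lt_def.2 (by simp only; omega)) hv

theorem TwoTransPart.moveToBottom_pairClosure [DecidableEq V] (hP : TwoTransPart G k P)
    {v₀ : V} (hv₀ : v₀ ∈ levelsFromTop P 0) :
    TwoTransPart G k
      (_root_.moveToBottom P ↑(pairClosure G (levelsFromTop P) v₀ (k - 2))) := by
  have hclosed : ∀ i j : Fin k, (i : ℕ) ≠ 0 → i < j →
      ∀ v ∈ P j ∩ ↑(pairClosure G (levelsFromTop P) v₀ (k - 2)),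
        HasTwoNeighborsIn G (P i ∩ ↑(pairClosure G (levelsFromTop P) v₀ (k - 2))) v := by
    intro i j hi hij v hv
    have hij' := Fin.lt_def.1 hij
    rw [← levelsFromTop_of_add_eq P i (e := k - 1 - i) (by omega)]
    rw [← levelsFromTop_of_add_eq P j (e := k - 1 - j) (by omega)] at hv
    exact hasTwoNeighborsIn_level_inter_pairClosure hP.pairwise_disjoint_levelsFromTop hv
      (by omega) (by omega) (hP.hasTwoNeighborsIn_levelsFromTop (by omega) (by omega) hv.1)
  refine hP.moveToBottom (fun i hi => ?_) hclosed
  by_cases htop : (i : ℕ) + 1 = k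
  · rw [levelsFromTop_of_add_eq P i (e := 0) htop] at hv₀
    exact ⟨v₀, hv₀, mem_pairClosure_self _⟩
  · have hk : 0 < k := i.pos
    have hv₀top : v₀ ∈ P ⟨k - 1, by omega⟩ := by
      rwa [← levelsFromTop_of_add_eq P _ (e := 0) (by simp; omega)]
    obtain ⟨u, -, hu, -⟩ := hclosed i ⟨k - 1, by omega⟩ hi (Fin.lt_def.2 (by simp; omega)) v₀
      ⟨hv₀top, mem_pairClosure_self _⟩
    exact ⟨u, hu⟩

end LevelsFromTop

theorem stmt12 {V : Type*} (G : SimpleGraph V)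
    (k : ℕ) (hk : 3 ≤ k) (htr : tr2 G = k) :
    ∃ P : Fin k → Set V, TwoTransPart G k P ∧
      (P ⟨k - 1, by omega⟩).ncard = 1 ∧
      (P ⟨k - 2, by omega⟩).ncard = 2 ∧
      ∀ i : ℕ, 2 ≤ i → i ≤ k - 2 → (P ⟨k - 1 - i, by omega⟩).ncard ≤ 2 * 3 ^ (i - 1) := by
  classical
  obtain ⟨P, hP⟩ := exists_twoTransPart_of_tr2_eq htr (by omega)
  obtain ⟨v₀, hv₀⟩ := hP.1 ⟨k - 1, by omega⟩
  rw [← levelsFromTop_of_add_eq P _ (e := 0) (by simp; omega)] at hv₀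
  have hL := hP.pairwise_disjoint_levelsFromTop
  set R : Set V := ↑(pairClosure G (levelsFromTop P) v₀ (k - 2))
  have hpart : ∀ (i : Fin k) (e : ℕ), (i : ℕ) + e + 1 = k → (i : ℕ) ≠ 0 →
      moveToBottom P R i = levelsFromTop P e ∩ R := fun i e he hi => by
    rw [moveToBottom_of_ne_zero R hi, levelsFromTop_of_add_eq P i he]
  refine ⟨moveToBottom P R, hP.moveToBottom_pairClosure hv₀, ?_, ?_, fun i hi2 hik => ?_⟩
  · rw [hpart _ 0 (by simp; omega) (by simp; omega), level_zero_inter_pairClosure hL hv₀,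
      Set.ncard_singleton]
  · rw [hpart _ 1 (by simp; omega) (by simp; omega)]
    refine le_antisymm (ncard_level_succ_inter_pairClosure_le hL hv₀ 0 _) ?_
    exact (hasTwoNeighborsIn_level_inter_pairClosure hL ⟨hv₀, mem_pairClosure_self _⟩
      zero_lt_one (by omega) (hP.hasTwoNeighborsIn_levelsFromTop zero_lt_one (by omega) hv₀)
      ).two_le_ncard ((Finset.finite_toSet _).inter_of_right _)
  · obtain ⟨e, rfl⟩ : ∃ e, i = e + 1 := ⟨i - 1, by omega⟩
    rw [hpart _ (e + 1) (by simp; omega) (by simp; omega)]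
    exact ncard_level_succ_inter_pairClosure_le hL hv₀ e _
end

section
/- Let G = K₅ − M, the complete graph on 5 vertices with a maximum matching (two disjoint edges) removed. Then Tr₂(G) = 3 = ⌊(5−1)/2⌋ + 1, although G is not complete. -/
open SimpleGraph

/-! Every part but the last contains two neighbours of a vertex of the last part, so a
2-transitive partition of `n` vertices has at most `⌊(n - 1) / 2⌋ + 1` parts. For `K₅ − M` the
bound is attained by the two removed edges followed by the fifth vertex. -/

namespace TwoTransPart

variable {V : Type*} {G : SimpleGraph V} {k : ℕ} {P : Fin k → Set V}

lemma one_lt_ncard [Finite V] (hP : TwoTransPart G k P) {i j : Fin k} (hij : i < j) :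
    1 < (P i).ncard := by
  obtain ⟨v, hv⟩ := hP.1 j
  obtain ⟨u, w, hu, hw, huw, -, -⟩ := hP.2.2 i j hij v hv
  exact (Set.one_lt_ncard_iff (Set.toFinite _)).mpr ⟨u, w, hu, hw, huw⟩

lemma sum_ncard [Fintype V] (hP : TwoTransPart G k P) :
    ∑ i, (P i).ncard = Fintype.card V := by
  classical
  choose part hpart using hP.2.1
  have hfiber : ∀ i, P i = {v | part v = i} := fun i ↦
    Set.ext fun v ↦ ⟨fun hv ↦ ((hpart v).2 i hv).symm, fun h ↦ h ▸ (hpart v).1⟩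
  rw [← Finset.card_univ, Finset.card_eq_sum_card_fiberwise (f := part) fun _ _ ↦
    Finset.mem_univ _]
  refine Finset.sum_congr rfl fun i _ ↦ ?_
  rw [hfiber, ← Set.ncard_coe_finset]
  congr 1
  ext v
  simp

lemma le_card [Fintype V] (hP : TwoTransPart G k P) : k ≤ (Fintype.card V - 1) / 2 + 1 := by
  cases k with
  | zero => exact Nat.zero_le _
  | succ m =>
    have hlast : 0 < (P (Fin.last m)).ncard := (Set.ncard_pos (Set.toFinite _)).mpr (hP.1 _)
    have hinit : ∑ _i : Fin m, 2 ≤ ∑ i : Fin m, (P i.castSucc).ncard :=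
      Finset.sum_le_sum fun i _ ↦ hP.one_lt_ncard (Fin.castSucc_lt_last i)
    have hcard : 2 * m + 1 ≤ Fintype.card V := by
      rw [← hP.sum_ncard, Fin.sum_univ_castSucc]
      simp only [Finset.sum_const, Finset.card_univ, Fintype.card_fin, smul_eq_mul] at hinit
      omega
    omega

end TwoTransPart

lemma le_tr2 {V : Type*} [Fintype V] {G : SimpleGraph V} {k : ℕ} {P : Fin k → Set V}
    (hP : TwoTransPart G k P) : k ≤ tr2 G :=
  le_csSup ⟨_, fun _ ⟨_, hQ⟩ ↦ hQ.le_card⟩ ⟨P, hP⟩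

lemma tr2_le {V : Type*} [Fintype V] (G : SimpleGraph V) :
    tr2 G ≤ (Fintype.card V - 1) / 2 + 1 := by
  rcases Set.eq_empty_or_nonempty {k | ∃ P : Fin k → Set V, TwoTransPart G k P} with h | h
  · simp [tr2, h]
  · exact csSup_le h fun _ ⟨_, hP⟩ ↦ hP.le_card

def k5MinusMatching : SimpleGraph (Fin 5) :=
  (⊤ : SimpleGraph (Fin 5)) \
    SimpleGraph.fromEdgeSet {s((0 : Fin 5), (1 : Fin 5)), s((2 : Fin 5), (3 : Fin 5))}

lemma k5MinusMatching_adj {u v : Fin 5} : k5MinusMatching.Adj u v ↔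
    u ≠ v ∧ s(u, v) ≠ s(0, 1) ∧ s(u, v) ≠ s(2, 3) := by
  simp only [k5MinusMatching, sdiff_adj, top_adj, fromEdgeSet_adj, Set.mem_insert_iff,
    Set.mem_singleton_iff]
  tauto

lemma k5MinusMatching_ne_top : k5MinusMatching ≠ ⊤ := by
  intro h
  have h01 : k5MinusMatching.Adj 0 1 := h ▸ (top_adj 0 1).mpr (by decide)
  simp [k5MinusMatching_adj] at h01

lemma twoTransPart_k5MinusMatching :
    TwoTransPart k5MinusMatching 3 fun i ↦ {v | ![0, 0, 1, 1, 2] v = i} := by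
  refine ⟨fun i ↦ ?_, fun v ↦ ⟨_, rfl, fun _ h ↦ h.symm⟩, ?_⟩
  · fin_cases i
    exacts [⟨0, rfl⟩, ⟨2, rfl⟩, ⟨4, rfl⟩]
  · simp only [Set.mem_ofPred_eq, k5MinusMatching_adj]
    decide

lemma tr2_k5MinusMatching : tr2 k5MinusMatching = 3 :=
  le_antisymm ((tr2_le _).trans (by simp)) (le_tr2 twoTransPart_k5MinusMatching)

theorem stmt14 :
    tr2 ((⊤ : SimpleGraph (Fin 5)) \
        SimpleGraph.fromEdgeSet {s((0 : Fin 5), (1 : Fin 5)), s((2 : Fin 5), (3 : Fin 5))}) = 3 ∧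
    3 = (5 - 1) / 2 + 1 ∧
    ((⊤ : SimpleGraph (Fin 5)) \
        SimpleGraph.fromEdgeSet {s((0 : Fin 5), (1 : Fin 5)), s((2 : Fin 5), (3 : Fin 5))}) ≠ ⊤ :=
  ⟨tr2_k5MinusMatching, rfl, k5MinusMatching_ne_top⟩
end

section
/- Let G = (S ∪ K, E) be a split graph with independent set S and clique K such that ω(G) = |K|. Then ⌈ω(G)/2⌉ ≤ Tr₂(G) ≤ ⌈ω(G)/2⌉ + 1. -/
open SimpleGraph

section TwoTransColoring

open Finset

variable {V : Type*} {G : SimpleGraph V} {k : ℕ}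

def IsTwoTransColoring (G : SimpleGraph V) (c : V → Fin k) : Prop :=
  Function.Surjective c ∧
    ∀ v, ∀ i < c v, ∃ u w, c u = i ∧ c w = i ∧ u ≠ w ∧ G.Adj u v ∧ G.Adj w v

theorem twoTransPart_iff_exists_coloring {P : Fin k → Set V} :
    TwoTransPart G k P ↔
      ∃ c : V → Fin k, IsTwoTransColoring G c ∧ P = fun i => c ⁻¹' {i} := by
  constructor
  · rintro ⟨hne, huniq, htrans⟩
    choose c hc hc_unique using huniq
    have hP : P = fun i => c ⁻¹' {i} := by
      ext i v
      exact ⟨fun hv => (hc_unique v i hv).symm, fun hv => hv ▸ hc v⟩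
    refine ⟨c, ⟨fun i => ?_, fun v i hi => ?_⟩, hP⟩
    · obtain ⟨v, hv⟩ := hne i
      exact ⟨v, (hc_unique v i hv).symm⟩
    · subst hP
      exact htrans i (c v) hi v rfl
  · rintro ⟨c, ⟨hsurj, htrans⟩, rfl⟩
    refine ⟨hsurj, fun v => ⟨c v, rfl, fun i hi => hi.symm⟩, ?_⟩
    rintro i j hij v rfl
    exact htrans v i hij

/-- Color the `t`-th vertex of the clique by `t / 2` and everything else by `0`: each color
class below that of a clique vertex contains two further clique vertices. -/
theorem exists_isTwoTransColoring_of_isClique {K : Set V} (hK : G.IsClique K)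
    (hn : 0 < K.ncard) : ∃ c : V → Fin ((K.ncard + 1) / 2), IsTwoTransColoring G c := by
  classical
  set n := K.ncard
  have : Finite K := (Set.finite_of_ncard_pos hn).to_subtype
  let e : K ≃ Fin n := Finite.equivFinOfCardEq (Nat.card_coe_set_eq K)
  let c : V → Fin ((n + 1) / 2) := fun v =>
    if hv : v ∈ K then ⟨e ⟨v, hv⟩ / 2, by omega⟩ else ⟨0, by omega⟩
  have hc : ∀ t : Fin n, c (e.symm t) = ⟨t / 2, by omega⟩ := by
    intro t
    simp [c]
  refine ⟨c, fun i => ⟨e.symm ⟨2 * i, by omega⟩, by simp [hc]⟩, fun v i hi => ?_⟩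
  have hvK : v ∈ K := by
    by_contra hv
    simp [c, hv, Fin.lt_def] at hi
  obtain ⟨t, rfl⟩ : ∃ t, (e.symm t : V) = v := ⟨e ⟨v, hvK⟩, by simp⟩
  replace hi : (i : ℕ) < t / 2 := by simpa [hc, Fin.lt_def] using hi
  refine ⟨e.symm ⟨2 * i, by omega⟩, e.symm ⟨2 * i + 1, by omega⟩, by simp [hc],
    by simp [hc, Fin.ext_iff]; omega,
    ?_, hK (e.symm _).2 (e.symm _).2 ?_, hK (e.symm _).2 (e.symm _).2 ?_⟩ <;>
  simp only [ne_eq, Subtype.val_inj, EmbeddingLike.apply_eq_iff_eq, Fin.ext_iff] <;> omega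

theorem two_mul_le_sum_add_one {f : Fin (k + 1) → ℕ} {m : Fin (k + 1)}
    (hf : ∀ i ≠ m, 2 ≤ f i + if i = Fin.last k then 1 else 0) : 2 * k ≤ ∑ i, f i + 1 :=
  calc 2 * k = #(univ.erase m) • 2 := by simp [card_erase_of_mem, mul_comm]
    _ ≤ ∑ i ∈ univ.erase m, (f i + if i = Fin.last k then 1 else 0) :=
      card_nsmul_le_sum _ _ _ fun i hi => hf i (ne_of_mem_erase hi)
    _ ≤ ∑ i, (f i + if i = Fin.last k then 1 else 0) := sum_le_sum_of_subset (erase_subset _ _)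
    _ = ∑ i, f i + 1 := by simp [sum_add_distrib]

/-- The pivot is the largest color of a vertex of `S`: every class below it holds two neighbors of
that vertex, which lie in `K` because `S` is independent. -/
theorem IsTwoTransColoring.exists_pivot_color {S K : Set V} (hcover : S ∪ K = Set.univ)
    (hS : G.IsIndepSet S) {c : V → Fin (k + 1)} (hc : IsTwoTransColoring G c) :
    ∃ m, (∀ i < m, ∃ u w, u ∈ K ∧ w ∈ K ∧ u ≠ w ∧ c u = i ∧ c w = i) ∧
      ∀ v, m < c v → v ∈ K := by
  have mem_K : ∀ {v}, v ∉ S → v ∈ K := fun hv => Set.compl_subset_iff_union.2 hcover hv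
  rcases S.eq_empty_or_nonempty with hSe | hSne
  · exact ⟨0, fun i hi => absurd hi (Fin.not_lt_zero i), fun v _ => mem_K (by simp [hSe])⟩
  obtain ⟨_, ⟨s, hs, rfl⟩, hmax⟩ := Set.exists_max_image (c '' S) id (Set.toFinite _)
    (hSne.image c)
  refine ⟨c s, fun i hi => ?_, fun v hv => mem_K fun hvS => ?_⟩
  · have nbr_mem_K : ∀ {u}, G.Adj u s → u ∈ K := fun hus =>
      mem_K fun huS => hS huS hs (G.ne_of_adj hus) hus
    obtain ⟨u, w, hu, hw, huw, hus, hws⟩ := hc.2 s i hi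
    exact ⟨u, w, nbr_mem_K hus, nbr_mem_K hws, huw, hu, hw⟩
  · exact absurd (hmax _ ⟨v, hvS, rfl⟩) (not_le.2 hv)

/-- Above the pivot the color classes lie in `K`, and all but the last one hold the two
neighbors of a vertex of the last class. -/
theorem IsTwoTransColoring.two_mul_le_ncard_add_one {S K : Set V} (hcover : S ∪ K = Set.univ)
    (hS : G.IsIndepSet S) (hK : K.Finite) {c : V → Fin (k + 1)} (hc : IsTwoTransColoring G c) :
    2 * k ≤ K.ncard + 1 := by
  classical
  let f : Fin (k + 1) → ℕ := fun i => #{v ∈ hK.toFinset | c v = i}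
  have hsum : ∑ i, f i = K.ncard := by
    rw [Set.ncard_eq_toFinset_card K hK,
      card_eq_sum_card_fiberwise (f := c) (t := univ) fun _ _ => mem_coe.2 (mem_univ _)]
  have two_le {u w i} (hu : u ∈ K) (hw : w ∈ K) (huw : u ≠ w) (hui : c u = i)
      (hwi : c w = i) : 2 ≤ f i :=
    one_lt_card.2 ⟨_, by simp [hu, hui], _, by simp [hw, hwi], huw⟩
  obtain ⟨m, hbelow, habove⟩ := hc.exists_pivot_color hcover hS
  refine (two_mul_le_sum_add_one (f := f) (m := m) fun i him => ?_).trans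
    (Nat.add_le_add_right hsum.le 1)
  rcases lt_or_gt_of_ne him with hi | hi
  · obtain ⟨u, w, hu, hw, huw, hui, hwi⟩ := hbelow i hi
    exact (two_le hu hw huw hui hwi).trans (Nat.le_add_right _ _)
  obtain ⟨v, rfl⟩ := hc.1 i
  by_cases hlast : c v = Fin.last k
  · have : 0 < f (c v) := card_pos.2 ⟨v, by simp [habove v hi]⟩
    simp only [hlast, if_true] at this ⊢
    omega
  obtain ⟨z, hz⟩ := hc.1 (Fin.last k)
  obtain ⟨u, w, hu, hw, huw, -, -⟩ := hc.2 z (c v) (hz ▸ lt_of_le_of_ne (Fin.le_last _) hlast)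
  exact (two_le (habove u (hu ▸ hi)) (habove w (hw ▸ hi)) huw hu hw).trans
    (Nat.le_add_right _ _)

end TwoTransColoring

theorem stmt15_general {V : Type*} [Fintype V] (G : SimpleGraph V) (S K : Set V)
    (hcover : S ∪ K = Set.univ)
    (hS : ∀ u ∈ S, ∀ v ∈ S, ¬ G.Adj u v)
    (hK : ∀ u ∈ K, ∀ v ∈ K, u ≠ v → G.Adj u v) :
    (K.ncard + 1) / 2 ≤ tr2 G ∧ tr2 G ≤ (K.ncard + 1) / 2 + 1 := by
  have hupper : ∀ k ∈ {k | ∃ P : Fin k → Set V, TwoTransPart G k P},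
      k ≤ (K.ncard + 1) / 2 + 1 := by
    rintro (_ | k) ⟨P, hP⟩
    · exact Nat.zero_le _
    obtain ⟨c, hc, -⟩ := twoTransPart_iff_exists_coloring.1 hP
    have := hc.two_mul_le_ncard_add_one hcover (fun u hu v hv _ => hS u hu v hv) K.toFinite
    omega
  refine ⟨?_, csSup_le' hupper⟩
  rcases Nat.eq_zero_or_pos K.ncard with hn | hn
  · simp [hn]
  obtain ⟨c, hc⟩ := exists_isTwoTransColoring_of_isClique hK hn
  exact le_csSup ⟨_, hupper⟩ ⟨_, twoTransPart_iff_exists_coloring.2 ⟨c, hc, rfl⟩⟩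

theorem stmt15 {V : Type*} [Fintype V] (G : SimpleGraph V) (S K : Set V)
    (hdisj : Disjoint S K) (hcover : S ∪ K = Set.univ)
    (hS : ∀ u ∈ S, ∀ v ∈ S, ¬ G.Adj u v)
    (hK : ∀ u ∈ K, ∀ v ∈ K, u ≠ v → G.Adj u v)
    (hmax : ∀ t : Set V, (∀ u ∈ t, ∀ v ∈ t, u ≠ v → G.Adj u v) → t.ncard ≤ K.ncard) :
    (K.ncard + 1) / 2 ≤ tr2 G ∧ tr2 G ≤ (K.ncard + 1) / 2 + 1 :=
  stmt15_general G S K hcover hS hK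
end

section
/- Let G = (S ∪ K, E) be a split graph with independent set S and clique K, with ω(G) = |K| odd. Then Tr₂(G) = ⌈ω(G)/2⌉ + 1 if and only if every vertex of K has at least two neighbors in S. -/
open SimpleGraph

/-!
Write `g i = |P i ∩ K|` for a 2-transitive partition `P 0, …, P (k - 1)`. A vertex of `S` has
all its neighbours in `K`, so every part below a part meeting `S` has `g ≥ 2`. A non-top part
with `g ≤ 1` holds two neighbours of a top vertex, hence meets `S`: so there is at most one such
thin part `P j`, and then the top part lies in `K`. Since `∑ g = |K| = 2m + 1`, this gives
`k ≤ m + 2`, and for `k = m + 2` it forces `P j ⊆ S`, `g = 2` on the other non-top parts and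
`g = 1` on the top. A clique vertex above `P j` then has two neighbours in `P j ⊆ S`, and one
below `P j` is among the two `K`-neighbours of each vertex of `P j`. Conversely, if every
clique vertex has two neighbours in `S`, then `S` followed by the clique cut into pairs (the
last one a singleton) is a 2-transitive partition with `m + 2` parts.
-/

theorem Finset.two_mul_card_compl_add_sum_le_sum {ι : Type*} [Fintype ι] [DecidableEq ι]
    (g : ι → ℕ) (R : Finset ι) (h : ∀ i ∉ R, 2 ≤ g i) :
    2 * (Fintype.card ι - R.card) + ∑ i ∈ R, g i ≤ ∑ i, g i := by
  rw [← Finset.sum_compl_add_sum R, ← Finset.card_compl]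
  gcongr
  simpa [mul_comm] using Finset.card_nsmul_le_sum Rᶜ g 2 fun i hi => h i (Finset.mem_compl.1 hi)

theorem SimpleGraph.neighborSet_subset_of_mem_independent {V : Type*} {G : SimpleGraph V}
    {S K : Set V} (hcover : S ∪ K = Set.univ) (hS : ∀ u ∈ S, ∀ v ∈ S, ¬ G.Adj u v)
    {s : V} (hs : s ∈ S) : G.neighborSet s ⊆ K := fun u hu =>
  (Set.eq_univ_iff_forall.1 hcover u).resolve_left fun huS => hS s hs u huS hu

theorem tr2_mem {V : Type*} {G : SimpleGraph V}
    (hbdd : BddAbove {k | ∃ P : Fin k → Set V, TwoTransPart G k P}) (hpos : 0 < tr2 G) :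
    tr2 G ∈ {k | ∃ P : Fin k → Set V, TwoTransPart G k P} := by
  refine Nat.sSup_mem (Set.nonempty_iff_ne_empty.2 fun h => ?_) hbdd
  simp [tr2, h] at hpos

namespace TwoTransPart

open scoped Function

variable {V : Type*} {G : SimpleGraph V} {k : ℕ} {P : Fin k → Set V}

theorem pairwise_disjoint (hP : TwoTransPart G k P) : Pairwise (Disjoint on P) :=
  fun _ _ hij => Set.disjoint_left.2 fun v hi hj => hij ((hP.2.1 v).unique hi hj)

theorem iUnion_eq_univ (hP : TwoTransPart G k P) : ⋃ i, P i = Set.univ :=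
  Set.eq_univ_of_forall fun v => Set.mem_iUnion.2 (hP.2.1 v).exists

theorem sum_ncard_inter [Finite V] (hP : TwoTransPart G k P) (K : Set V) :
    ∑ i, (P i ∩ K).ncard = K.ncard := by
  rw [← finsum_eq_sum_of_fintype, ← Set.ncard_iUnion_of_finite (fun _ => Set.toFinite _)
    fun i j hij => (hP.pairwise_disjoint hij).mono Set.inter_subset_left Set.inter_subset_left,
    ← Set.iUnion_inter, hP.iUnion_eq_univ, Set.univ_inter]

theorem two_le_ncard_neighborSet_inter [Finite V] (hP : TwoTransPart G k P) {i j : Fin k}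
    (hij : i < j) {v : V} (hv : v ∈ P j) : 2 ≤ (G.neighborSet v ∩ P i).ncard := by
  obtain ⟨u, w, hu, hw, huw, hadju, hadjw⟩ := hP.2.2 i j hij v hv
  exact (Set.one_lt_ncard_iff (Set.toFinite _)).2 ⟨u, w, ⟨hadju.symm, hu⟩, ⟨hadjw.symm, hw⟩, huw⟩

variable [Finite V] {S K : Set V}

theorem two_le_ncard_inter_of_mem_independent (hP : TwoTransPart G k P)
    (hcover : S ∪ K = Set.univ) (hS : ∀ u ∈ S, ∀ v ∈ S, ¬ G.Adj u v) {i j : Fin k}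
    (hij : i < j) {s : V} (hs : s ∈ P j) (hsS : s ∈ S) : 2 ≤ (P i ∩ K).ncard :=
  (hP.two_le_ncard_neighborSet_inter hij hs).trans <| Set.ncard_le_ncard fun _ hu =>
    ⟨hu.2, neighborSet_subset_of_mem_independent hcover hS hsS hu.1⟩

theorem subset_of_ncard_inter_le_one (hP : TwoTransPart G k P)
    (hcover : S ∪ K = Set.univ) (hS : ∀ u ∈ S, ∀ v ∈ S, ¬ G.Adj u v) {i j : Fin k}
    (hij : i < j) (hthin : (P i ∩ K).ncard ≤ 1) : P j ⊆ K := fun v hv =>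
  (Set.eq_univ_iff_forall.1 hcover v).resolve_left fun hvS => by
    have := hP.two_le_ncard_inter_of_mem_independent hcover hS hij hv hvS
    omega

theorem two_le_ncard_inter_of_ncard_inter_le_one (hP : TwoTransPart G k P)
    (hcover : S ∪ K = Set.univ) (hS : ∀ u ∈ S, ∀ v ∈ S, ¬ G.Adj u v) {i j l : Fin k}
    (hij : i < j) (hjl : j < l) (hthin : (P j ∩ K).ncard ≤ 1) : 2 ≤ (P i ∩ K).ncard := by
  -- `P j` is not contained in `K`, since some vertex of `P l` has two neighbours in it
  obtain ⟨v, hv⟩ := hP.1 l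
  obtain ⟨s, ⟨-, hs⟩, hsK⟩ : ∃ s, s ∈ G.neighborSet v ∩ P j ∧ s ∉ K := by
    by_contra! h
    have := (hP.two_le_ncard_neighborSet_inter hjl hv).trans
      (Set.ncard_le_ncard (t := P j ∩ K) fun u hu => ⟨hu.2, h u hu⟩)
    omega
  exact hP.two_le_ncard_inter_of_mem_independent hcover hS hij hs
    ((Set.eq_univ_iff_forall.1 hcover s).resolve_right hsK)

theorem subset_neighborSet_of_ncard_inter_le_two (hP : TwoTransPart G k P)
    (hcover : S ∪ K = Set.univ) (hS : ∀ u ∈ S, ∀ v ∈ S, ¬ G.Adj u v) {t j : Fin k}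
    (htj : t < j) {v : V} (hv : v ∈ P t ∩ K) (htwo : (P t ∩ K).ncard ≤ 2) :
    P j ∩ S ⊆ G.neighborSet v := by
  rintro s ⟨hs, hsS⟩
  obtain ⟨u, w, hu, hw, huw, hadju, hadjw⟩ := hP.2.2 t j htj s hs
  have hK := neighborSet_subset_of_mem_independent hcover hS hsS
  -- the two neighbours of `s` in `P t` exhaust `P t ∩ K`, so one of them is `v`
  have hpair : ({u, w} : Set V) = P t ∩ K := by
    refine Set.eq_of_subset_of_ncard_le ?_ (by rw [Set.ncard_pair huw]; exact htwo)
    rintro x (rfl | rfl)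
    exacts [⟨hu, hK hadju.symm⟩, ⟨hw, hK hadjw.symm⟩]
  rcases hpair ▸ hv with rfl | rfl
  exacts [hadju, hadjw]

section LastPart

variable {n : ℕ} {P : Fin (n + 1) → Set V}

theorem two_le_ncard_inter_of_ne (hP : TwoTransPart G (n + 1) P)
    (hcover : S ∪ K = Set.univ) (hS : ∀ u ∈ S, ∀ v ∈ S, ¬ G.Adj u v) {i j : Fin (n + 1)}
    (hj : j < Fin.last n) (hthin : (P j ∩ K).ncard ≤ 1) (hij : i ≠ j) (hi : i ≠ Fin.last n) :
    2 ≤ (P i ∩ K).ncard := by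
  rcases hij.lt_or_gt with hij | hji
  · exact hP.two_le_ncard_inter_of_ncard_inter_le_one hcover hS hij hj hthin
  · by_contra! hthin'
    have := hP.two_le_ncard_inter_of_ncard_inter_le_one hcover hS hji
      (Fin.lt_last_iff_ne_last.2 hi) (Nat.le_of_lt_succ hthin')
    omega

theorem one_le_ncard_inter_last (hP : TwoTransPart G (n + 1) P)
    (hcover : S ∪ K = Set.univ) (hS : ∀ u ∈ S, ∀ v ∈ S, ¬ G.Adj u v) {j : Fin (n + 1)}
    (hj : j < Fin.last n) (hthin : (P j ∩ K).ncard ≤ 1) : 1 ≤ (P (Fin.last n) ∩ K).ncard := by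
  rw [Set.inter_eq_left.2 (hP.subset_of_ncard_inter_le_one hcover hS hj hthin)]
  exact (Set.ncard_pos (Set.toFinite _)).2 (hP.1 _)

theorem exists_ncard_inter_le_one (hP : TwoTransPart G (n + 1) P) (hK : K.ncard < 2 * n) :
    ∃ j < Fin.last n, (P j ∩ K).ncard ≤ 1 := by
  classical
  by_contra! h
  have := Finset.two_mul_card_compl_add_sum_le_sum (fun i => (P i ∩ K).ncard) {Fin.last n}
    fun i hi => h i (Fin.lt_last_iff_ne_last.2 (Finset.notMem_singleton.1 hi))
  simp only [Fintype.card_fin, Finset.card_singleton, Finset.sum_singleton,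
    hP.sum_ncard_inter] at this
  omega

theorem le_ncard_of_ncard_inter_le_one (hP : TwoTransPart G (n + 1) P)
    (hcover : S ∪ K = Set.univ) (hS : ∀ u ∈ S, ∀ v ∈ S, ¬ G.Adj u v) {j : Fin (n + 1)}
    (hj : j < Fin.last n) (hthin : (P j ∩ K).ncard ≤ 1) (R : Finset (Fin (n + 1)))
    (hjR : j ∈ R) (hlR : Fin.last n ∈ R) :
    2 * (n + 1 - R.card) + ∑ i ∈ R, (P i ∩ K).ncard ≤ K.ncard := by
  simpa [hP.sum_ncard_inter] using Finset.two_mul_card_compl_add_sum_le_sum _ R fun i hi =>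
    hP.two_le_ncard_inter_of_ne hcover hS hj hthin (ne_of_mem_of_not_mem hjR hi).symm
      (ne_of_mem_of_not_mem hlR hi).symm

end LastPart

theorem two_mul_le_ncard_add_three (hP : TwoTransPart G k P) (hcover : S ∪ K = Set.univ)
    (hS : ∀ u ∈ S, ∀ v ∈ S, ¬ G.Adj u v) : 2 * k ≤ K.ncard + 3 := by
  obtain _ | n := k
  · omega
  by_contra! hk
  obtain ⟨j, hj, hthin⟩ := hP.exists_ncard_inter_le_one (by omega : K.ncard < 2 * n)
  have hlast := hP.one_le_ncard_inter_last hcover hS hj hthin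
  have := hP.le_ncard_of_ncard_inter_le_one hcover hS hj hthin {Fin.last n, j} (by simp) (by simp)
  rw [Finset.card_pair hj.ne', Finset.sum_pair hj.ne'] at this
  omega

theorem two_le_ncard_neighborSet_inter_of_two_mul_le (hP : TwoTransPart G k P)
    (hcover : S ∪ K = Set.univ) (hS : ∀ u ∈ S, ∀ v ∈ S, ¬ G.Adj u v)
    (htight : K.ncard + 3 ≤ 2 * k) {v : V} (hv : v ∈ K) :
    2 ≤ (G.neighborSet v ∩ S).ncard := by
  obtain _ | n := k
  · omega
  obtain ⟨j, hj, hthin⟩ := hP.exists_ncard_inter_le_one (by omega : K.ncard < 2 * n)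
  have hlast := hP.one_le_ncard_inter_last hcover hS hj hthin
  have hcount := hP.le_ncard_of_ncard_inter_le_one hcover hS hj hthin {Fin.last n, j}
    (by simp) (by simp)
  rw [Finset.card_pair hj.ne', Finset.sum_pair hj.ne'] at hcount
  have hjK : Disjoint (P j) K := Set.disjoint_iff_inter_eq_empty.2
    ((Set.ncard_eq_zero (Set.toFinite _)).1 (by omega))
  have hjS : P j ⊆ S := fun x hx =>
    (Set.eq_univ_iff_forall.1 hcover x).resolve_right (hjK.notMem_of_mem_left hx)
  obtain ⟨t, hvt, -⟩ := hP.2.1 v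
  rcases lt_trichotomy j t with hjt | rfl | htj
  · exact (hP.two_le_ncard_neighborSet_inter hjt hvt).trans
      (Set.ncard_le_ncard (Set.inter_subset_inter_right _ hjS))
  · exact absurd hv (hjK.notMem_of_mem_left hvt)
  · have htl : t ≠ Fin.last n := (htj.trans hj).ne
    have hcount' := hP.le_ncard_of_ncard_inter_le_one hcover hS hj hthin {Fin.last n, j, t}
      (by simp) (by simp)
    have hlt : Fin.last n ∉ ({j, t} : Finset _) := by simp [hj.ne', htl.symm]
    rw [Finset.card_insert_of_notMem hlt, Finset.card_pair htj.ne', Finset.sum_insert hlt,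
      Finset.sum_pair htj.ne'] at hcount'
    have hsub := hP.subset_neighborSet_of_ncard_inter_le_two hcover hS htj ⟨hvt, hv⟩ (by omega)
    obtain ⟨w, hw⟩ := hP.1 (Fin.last n)
    calc 2 ≤ (G.neighborSet w ∩ P j).ncard := hP.two_le_ncard_neighborSet_inter hj hw
      _ ≤ (G.neighborSet v ∩ S).ncard :=
        Set.ncard_le_ncard fun x hx => ⟨hsub ⟨hx.2, hjS hx.2⟩, hjS hx.2⟩

end TwoTransPart

theorem twoTransPart_preimage {V : Type*} {G : SimpleGraph V} {k : ℕ} {f : V → Fin k}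
    (hf : Function.Surjective f)
    (hadj : ∀ v, ∀ i < f v, ∃ u w, f u = i ∧ f w = i ∧ u ≠ w ∧ G.Adj u v ∧ G.Adj w v) :
    TwoTransPart G k fun i => f ⁻¹' {i} :=
  ⟨hf, fun v => ⟨f v, rfl, fun _ hi => hi.symm⟩, fun i _ hij v hv => hadj v i (hv ▸ hij)⟩

theorem exists_twoTransPart_of_two_le_ncard_neighborSet_inter {V : Type*} [Finite V]
    {G : SimpleGraph V} {S K : Set V} (hdisj : Disjoint S K)
    (hK : ∀ u ∈ K, ∀ v ∈ K, u ≠ v → G.Adj u v) {m : ℕ} (hcard : K.ncard = 2 * m + 1)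
    (hnb : ∀ v ∈ K, 2 ≤ (G.neighborSet v ∩ S).ncard) :
    ∃ P : Fin (m + 2) → Set V, TwoTransPart G (m + 2) P := by
  classical
  let e : K ≃ Fin (2 * m + 1) := Finite.equivFinOfCardEq (by rw [Nat.card_coe_set_eq, hcard])
  let half (r : Fin (2 * m + 1)) : Fin (m + 1) := ⟨r / 2, by omega⟩
  let f (v : V) : Fin (m + 2) := if h : v ∈ K then (half (e ⟨v, h⟩)).succ else 0
  have hf_symm (r : Fin (2 * m + 1)) : f (e.symm r) = (half r).succ := by simp [f]
  have hf_zero {v : V} (hv : v ∉ K) : f v = 0 := dif_neg hv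
  have hbottom {v : V} (hv : v ∈ K) : ∃ u w, f u = 0 ∧ f w = 0 ∧ u ≠ w ∧ G.Adj u v ∧ G.Adj w v := by
    obtain ⟨u, w, hu, hw, huw⟩ := (Set.one_lt_ncard_iff (Set.toFinite _)).1 (hnb v hv)
    exact ⟨u, w, hf_zero (hdisj.notMem_of_mem_left hu.2),
      hf_zero (hdisj.notMem_of_mem_left hw.2), huw, hu.1.symm, hw.1.symm⟩
  refine ⟨_, twoTransPart_preimage (f := f) ?_ ?_⟩
  · intro i
    induction i using Fin.cases with
    | zero =>
      obtain ⟨u, -, hu, -⟩ := hbottom (e.symm 0).2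
      exact ⟨u, hu⟩
    | succ i => exact ⟨e.symm ⟨2 * i, by omega⟩, by rw [hf_symm]; congr; ext; simp [half]⟩
  · intro v i hi
    have hv : v ∈ K := by_contra fun hv => by simp [hf_zero hv] at hi
    induction i using Fin.cases with
    | zero => exact hbottom hv
    | succ i =>
      have hpart (r : Fin (2 * m + 1)) (hr : (r : ℕ) / 2 = i) : f (e.symm r) = i.succ := by
        rw [hf_symm]; congr; ext; exact hr
      have him : (i : ℕ) < m := by
        have hlt : (i.succ : ℕ) < f v := hi
        have := (f v).isLt
        rw [Fin.val_succ] at hlt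
        omega
      let u := e.symm ⟨2 * i, by omega⟩
      let w := e.symm ⟨2 * i + 1, by omega⟩
      have hu : f u = i.succ := hpart _ (by simp)
      have hw : f w = i.succ := hpart _ (by simp; omega)
      refine ⟨u, w, hu, hw, fun h => ?_, hK u (e.symm _).2 v hv ?_, hK w (e.symm _).2 v hv ?_⟩
      · simpa [u, w] using e.symm.injective (Subtype.ext h)
      · exact ne_of_apply_ne f (hu ▸ hi.ne)
      · exact ne_of_apply_ne f (hw ▸ hi.ne)

theorem stmt16_general {V : Type*} [Fintype V] (G : SimpleGraph V) (S K : Set V)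
    (hdisj : Disjoint S K) (hcover : S ∪ K = Set.univ)
    (hS : ∀ u ∈ S, ∀ v ∈ S, ¬ G.Adj u v)
    (hK : ∀ u ∈ K, ∀ v ∈ K, u ≠ v → G.Adj u v)
    (hodd : Odd K.ncard) :
    tr2 G = (K.ncard + 1) / 2 + 1 ↔ ∀ v ∈ K, 2 ≤ (G.neighborSet v ∩ S).ncard := by
  obtain ⟨m, hm⟩ := hodd
  rw [show (K.ncard + 1) / 2 + 1 = m + 2 by omega]
  have hbound : m + 2 ∈ upperBounds {k | ∃ P : Fin k → Set V, TwoTransPart G k P} := by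
    rintro k ⟨P, hP⟩
    have := hP.two_mul_le_ncard_add_three hcover hS
    omega
  constructor
  · intro htr v hv
    obtain ⟨P, hP⟩ := htr ▸ tr2_mem ⟨m + 2, hbound⟩ (by omega)
    exact hP.two_le_ncard_neighborSet_inter_of_two_mul_le hcover hS (by omega) hv
  · intro hnb
    obtain ⟨P, hP⟩ := exists_twoTransPart_of_two_le_ncard_neighborSet_inter hdisj hK hm hnb
    exact le_antisymm (csSup_le' hbound) (le_csSup ⟨m + 2, hbound⟩ ⟨P, hP⟩)

theorem stmt16 {V : Type*} [Fintype V] (G : SimpleGraph V) (S K : Set V)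
    (hdisj : Disjoint S K) (hcover : S ∪ K = Set.univ)
    (hS : ∀ u ∈ S, ∀ v ∈ S, ¬ G.Adj u v)
    (hK : ∀ u ∈ K, ∀ v ∈ K, u ≠ v → G.Adj u v)
    (hmax : ∀ t : Set V, (∀ u ∈ t, ∀ v ∈ t, u ≠ v → G.Adj u v) → t.ncard ≤ K.ncard)
    (hodd : Odd K.ncard) :
    tr2 G = (K.ncard + 1) / 2 + 1 ↔ ∀ v ∈ K, 2 ≤ (G.neighborSet v ∩ S).ncard :=
  stmt16_general G S K hdisj hcover hS hK hodd
end

section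
/- Let v be a vertex of a tree T whose 2-transitive number t₂(v, T) equals t (i.e., t is the maximum index p over all 2-transitive partitions π = {V₁,...,V_k} of T such that v ∈ V_p). Then for every 1 ≤ i ≤ t, there exists a 2-transitive partition {V₁, ..., V_i} of T of size i with v ∈ V_i. -/
open SimpleGraph

/-- `v` appears in position `p` (i.e. in the `p`-th part) of some 2-transitive partition. -/
def HasPos2 {V : Type*} (G : SimpleGraph V) (v : V) (p : ℕ) : Prop :=
  ∃ (k : ℕ) (P : Fin k → Set V), TwoTransPart G k P ∧ ∃ i : Fin k, v ∈ P i ∧ (i : ℕ) + 1 = p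

/-- Parts `n, n + 1, …, k - 1` of `P` merged into a single last part. -/
def mergeTail {V : Type*} {k : ℕ} (P : Fin k → Set V) (n : ℕ) (m : Fin (n + 1)) : Set V :=
  ⋃ l : Fin k, ⋃ _ : min (l : ℕ) n = m, P l

theorem mem_mergeTail {V : Type*} {k n : ℕ} {P : Fin k → Set V} {m : Fin (n + 1)} {u : V} :
    u ∈ mergeTail P n m ↔ ∃ l : Fin k, min (l : ℕ) n = m ∧ u ∈ P l := by
  simp [mergeTail]

theorem TwoTransPart.mergeTail {V : Type*} {G : SimpleGraph V} {k n : ℕ} {P : Fin k → Set V}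
    (hP : TwoTransPart G k P) (hn : n < k) : TwoTransPart G (n + 1) (mergeTail P n) := by
  obtain ⟨hne, hpart, htrans⟩ := hP
  refine ⟨fun m => ?_, fun u => ?_, fun a b hab u hu => ?_⟩
  · obtain ⟨u, hu⟩ := hne ⟨m, by omega⟩
    exact ⟨u, mem_mergeTail.2 ⟨_, min_eq_left (show (m : ℕ) ≤ n by omega), hu⟩⟩
  · obtain ⟨l, hul, hl⟩ := hpart u
    refine ⟨⟨min l n, by omega⟩, mem_mergeTail.2 ⟨l, rfl, hul⟩, fun m hm => ?_⟩
    obtain ⟨l', hl'm, hul'⟩ := mem_mergeTail.1 hm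
    obtain rfl := hl l' hul'
    exact Fin.ext hl'm.symm
  · have hab : (a : ℕ) < b := hab
    obtain ⟨l, hlb, hul⟩ := mem_mergeTail.1 hu
    -- `a < b ≤ n`, so part `a` is untouched by the merge.
    have hPa (x : V) (hx : x ∈ P ⟨a, by omega⟩) : x ∈ _root_.mergeTail P n a :=
      mem_mergeTail.2 ⟨_, min_eq_left (show (a : ℕ) ≤ n by omega), hx⟩
    obtain ⟨x, y, hx, hy, hxy, hxu, hyu⟩ :=
      htrans ⟨a, by omega⟩ l (Fin.lt_def.2 (show (a : ℕ) < l by omega)) u hul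
    exact ⟨x, y, hPa x hx, hPa y hy, hxy, hxu, hyu⟩

theorem stmt19 {V : Type*} (G : SimpleGraph V)
    (v : V) (t : ℕ) (ht : IsGreatest {p | HasPos2 G v p} t) :
    ∀ i : ℕ, ∀ _hi : 1 ≤ i, ∀ _hit : i ≤ t,
      ∃ P : Fin i → Set V, TwoTransPart G i P ∧ v ∈ P ⟨i - 1, by omega⟩ := by
  intro i hi hit
  obtain ⟨n, rfl⟩ : ∃ n, i = n + 1 := ⟨i - 1, by omega⟩
  obtain ⟨k, P, hP, j, hvj, hjt⟩ := ht.1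
  exact ⟨mergeTail P n, hP.mergeTail (by omega),
    mem_mergeTail.2 ⟨j, min_eq_right (by omega), hvj⟩⟩
end
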